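/- arXiv:1910.13378 — 2 statements merged into one kernel-verified Lean document; each statement's English description precedes it below -/
import Mathlib

section
/- Toeplitz determinant formula: for all positive integers a, b, c and real q_1,…,q_c, s_{(a^b)}(1^b, q_1,…,q_c) = det[ φ̂_{i−j} ]_{i,j=1}^{a}, where for each integer k, φ̂_k = ∑_{ℓ ≥ 0} C(b, ℓ+k) e_ℓ(q_1,…,q_c) (a finite sum, with the binomial coefficient C(b,m) zero for m < 0 or m > b, and e_ℓ the elementary symmetric polynomial in c variables). -/
open scoped BigOperators

/-- A plane partition: a matrix of naturals (0-indexed) with weakly decreasing rows and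
columns and finitely many nonzero entries. -/
structure PlanePartition where
  entry : ℕ → ℕ → ℕ
  row_decr : ∀ i j, entry i (j + 1) ≤ entry i j
  col_decr : ∀ i j, entry (i + 1) j ≤ entry i j
  finite_support : {p : ℕ × ℕ | entry p.1 p.2 ≠ 0}.Finite

namespace PlanePartition

/-- `π` has at most `b` (nonzero) rows. -/
def rowsLE (π : PlanePartition) (b : ℕ) : Prop := ∀ i j, b ≤ i → π.entry i j = 0

/-- `π` has at most `a` (nonzero) columns. -/
def colsLE (π : PlanePartition) (a : ℕ) : Prop := ∀ i j, a ≤ j → π.entry i j = 0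

/-- all entries of `π` are at most `c`. -/
def entriesLE (π : PlanePartition) (c : ℕ) : Prop := ∀ i j, π.entry i j ≤ c

/-- the number of columns of `π` containing the entry `ℓ`. -/
noncomputable def cCol (π : PlanePartition) (ℓ : ℕ) : ℕ :=
  {j | ∃ i, π.entry i j = ℓ}.ncard

/-- the length of the `i`-th row of `π` (0-indexed); this is the `(i+1)`-st part of
the shape of `π`. -/
noncomputable def rowLen (π : PlanePartition) (i : ℕ) : ℕ :=
  {j | 0 < π.entry i j}.ncard

/-- `d_{iℓ} = #{j : π_{ij} = ℓ > π_{i+1,j}}`; the row index `i` is 0-indexed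
while `ℓ` denotes the actual value. -/
noncomputable def phi (π : PlanePartition) (i ℓ : ℕ) : ℕ :=
  {j | π.entry i j = ℓ ∧ π.entry (i + 1) j < ℓ}.ncard

/-- `Φ(π)` as a 0-indexed matrix: entry `(i, l)` counts `j` with `π_{ij} = l+1 > π_{i+1,j}`. -/
noncomputable def phiMatrix (π : PlanePartition) : ℕ → ℕ → ℕ :=
  fun i l => π.phi i (l + 1)

/-- `π` has shape `μ`. -/
def hasShape (π : PlanePartition) (μ : YoungDiagram) : Prop :=
  ∀ i j, 0 < π.entry i j ↔ (i, j) ∈ μ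

/-- the descent set of `π` (0-indexed positions). -/
def des (π : PlanePartition) : Set (ℕ × ℕ) :=
  {p | π.entry (p.1 + 1) p.2 < π.entry p.1 p.2}

end PlanePartition

/-- the set of plane partitions with at most `a` columns, at most `b` rows
and entries at most `c`. -/
def PP (a b c : ℕ) : Set PlanePartition :=
  {π | π.colsLE a ∧ π.rowsLE b ∧ π.entriesLE c}

/-- `PP(∞, b, c)`: plane partitions with at most `b` rows and entries at most `c`. -/
def PPinf (b c : ℕ) : Set PlanePartition :=
  {π | π.rowsLE b ∧ π.entriesLE c}

/-- a monotone lattice path (as a list of points) from `s` to `t`. -/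
def IsMonPath (L : List (ℕ × ℕ)) (s t : ℕ × ℕ) : Prop :=
  L.head? = some s ∧ L.getLast? = some t ∧
    L.Chain' fun p q => q = (p.1 + 1, p.2) ∨ q = (p.1, p.2 + 1)

/-- the last passage time: the maximal weight of a monotone path from `s` to `t`
in the matrix `d`. -/
noncomputable def lastPassage (d : ℕ → ℕ → ℕ) (s t : ℕ × ℕ) : ℕ :=
  sSup {n | ∃ L, IsMonPath L s t ∧ n = (L.map fun p => d p.1 p.2).sum}

/-- `b×c` matrices of naturals (as functions vanishing off `[0,b) × [0,c)`) whose
last passage time `G(b,c)` is at most `a`. -/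
def BM (a b c : ℕ) : Set (ℕ → ℕ → ℕ) :=
  {d | (∀ i j, b ≤ i → d i j = 0) ∧ (∀ i j, c ≤ j → d i j = 0) ∧
    lastPassage d (0, 0) (b - 1, c - 1) ≤ a}

/-- the rectangular Young diagram of the partition `(a^b)` (with `b` rows of length `a`). -/
def rectDiagram (a b : ℕ) : YoungDiagram where
  cells := Finset.range b ×ˢ Finset.range a
  isLowerSet := by
    intro p q hle hp
    simp only [Finset.coe_product, Set.mem_prod, Finset.mem_coe, Finset.mem_range] at hp ⊢
    exact ⟨lt_of_le_of_lt hle.1 hp.1, lt_of_le_of_lt hle.2 hp.2⟩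

/-- the variables `(1^b, x_1, x_2, …)`: the first `b` variables are specialized to `1`. -/
def oneExtend (b : ℕ) (x : ℕ → ℝ) : ℕ → ℝ :=
  fun i => if i < b then 1 else x (i - b)

/-- the Schur polynomial `s_μ(x_1, …, x_N)` evaluated at real arguments;
variables are 0-indexed (`x ℓ` is the variable `x_{ℓ+1}`), as are tableau entries. -/
noncomputable def schur (μ : YoungDiagram) (N : ℕ) (x : ℕ → ℝ) : ℝ :=
  ∑ᶠ T ∈ {T : SemistandardYoungTableau μ | ∀ i j, (i, j) ∈ μ → T i j < N},
    ∏ p ∈ μ.cells, x (T p.1 p.2)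

/-- the dual symmetric Grothendieck polynomial `g_μ(x_1, …, x_n)` evaluated at real
arguments; variables are 0-indexed (`x ℓ` is the variable `x_{ℓ+1}`). -/
noncomputable def grothG (μ : YoungDiagram) (n : ℕ) (x : ℕ → ℝ) : ℝ :=
  ∑ᶠ π ∈ {π : PlanePartition | π.hasShape μ ∧ π.entriesLE n},
    ∏ ℓ ∈ Finset.range n, x ℓ ^ π.cCol (ℓ + 1)

/-- the elementary symmetric polynomial `e_m(x_1, …, x_n)` evaluated at real arguments. -/
noncomputable def esym (n : ℕ) (x : ℕ → ℝ) (m : ℕ) : ℝ :=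
  ∑ S ∈ (Finset.range n).powersetCard m, ∏ i ∈ S, x i

/-- `e_m` for an integer index `m`, with `e_m = 0` for `m < 0`. -/
noncomputable def esymZ (n : ℕ) (x : ℕ → ℝ) (m : ℤ) : ℝ :=
  if 0 ≤ m then esym n x m.toNat else 0

/-- the weight `∏_{(i,j) ∈ Des(π)} q_{π_{ij}}`; the parameters are 0-indexed
(`q ℓ` is the parameter `q_{ℓ+1}`). -/
noncomputable def desWeight (π : PlanePartition) (q : ℕ → ℝ) : ℝ :=
  ∏ᶠ p ∈ π.des, q (π.entry p.1 p.2 - 1)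

/-- the probability of a configuration `w` of a `b×c` matrix of i.i.d. Geom(q) entries,
where `P(entry = k) = (1-q) qᵏ`. -/
noncomputable def geomWeight (q : ℝ) (b c : ℕ) (w : Fin b × Fin c → ℕ) : ℝ :=
  ∏ p : Fin b × Fin c, ((1 - q) * q ^ w p)

/-- extend a `b×c` matrix to an `ℕ × ℕ`-indexed matrix by zero. -/
def matExt {b c : ℕ} (w : Fin b × Fin c → ℕ) : ℕ → ℕ → ℕ :=
  fun i j => if h : i < b ∧ j < c then w (⟨i, h.1⟩, ⟨j, h.2⟩) else 0



/-! ### Auxiliary development for the Toeplitz determinant formula -/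

namespace SchurToeplitzAux

open Finset

/-- weight of a finite set of variable indices -/
noncomputable def wt (x : ℕ → ℝ) (S : Finset ℕ) : ℝ := ∏ i ∈ S, x i

/-- the collection of subsets realizing `esymZ N x m` -/
def EF (N : ℕ) (m : ℤ) : Finset (Finset ℕ) :=
  if 0 ≤ m then (Finset.range N).powersetCard m.toNat else ∅

lemma mem_EF {N : ℕ} {m : ℤ} {S : Finset ℕ} :
    S ∈ EF N m ↔ S ⊆ Finset.range N ∧ (S.card : ℤ) = m := by
  unfold EF
  split_ifs with h
  · rw [Finset.mem_powersetCard]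
    constructor
    · rintro ⟨h1, h2⟩; exact ⟨h1, by rw [h2]; exact (Int.toNat_of_nonneg h).symm ▸ rfl⟩
    · rintro ⟨h1, h2⟩; exact ⟨h1, by omega⟩
  · simp only [Finset.notMem_empty, false_iff, not_and]
    intro _ h2; omega

lemma esymZ_eq_sum (N : ℕ) (x : ℕ → ℝ) (m : ℤ) :
    esymZ N x m = ∑ S ∈ EF N m, wt x S := by
  unfold esymZ EF esym wt
  split_ifs with h <;> simp

/-- configurations: a permutation together with a tuple of subsets -/
abbrev Cfg (a : ℕ) := Σ _σ : Equiv.Perm (Fin a), Fin a → Finset ℕ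

/-- the configuration space for the determinant expansion -/
def CS (a b N : ℕ) : Finset (Cfg a) :=
  Finset.univ.sigma fun σ => Fintype.piFinset fun j => EF N ((b : ℤ) + (j : ℕ) - ((σ j : ℕ) : ℤ))

lemma mem_CS {a b N : ℕ} {c : Cfg a} :
    c ∈ CS a b N ↔ ∀ k : Fin a, c.2 k ⊆ Finset.range N ∧
      ((c.2 k).card : ℤ) = (b : ℤ) + (k : ℕ) - ((c.1 k : ℕ) : ℤ) := by
  obtain ⟨σ, S⟩ := c
  simp only [CS, Finset.mem_sigma, Finset.mem_univ, true_and, Fintype.mem_piFinset, mem_EF]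

/-- the (integer-valued) height of path `k` at time `t` -/
def pf {a : ℕ} (c : Cfg a) (k : Fin a) (t : ℕ) : ℤ :=
  ((k : ℕ) : ℤ) - ((c.2 k ∩ Finset.range t).card : ℤ)

/-- non-crossing predicate -/
def NC {a : ℕ} (c : Cfg a) : Prop :=
  ∀ i j : Fin a, i < j → ∀ t : ℕ, pf c i t ≠ pf c j t

/-- the weight of a configuration -/
noncomputable def cwt {a : ℕ} (x : ℕ → ℝ) (c : Cfg a) : ℝ :=
  ((Equiv.Perm.sign c.1 : ℤ) : ℝ) * ∏ j : Fin a, wt x (c.2 j)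

lemma det_expand (a b N : ℕ) (x : ℕ → ℝ) :
    Matrix.det (fun i j : Fin a => esymZ N x ((b : ℤ) + (j : ℕ) - ((i : ℕ) : ℤ)))
      = ∑ c ∈ CS a b N, cwt x c := by
  refine (Matrix.det_apply _).trans ?_
  rw [CS, Finset.sum_sigma]
  refine Finset.sum_congr rfl fun σ _ => ?_
  have : (∏ j : Fin a, (fun i j : Fin a => esymZ N x ((b : ℤ) + (j : ℕ) - ((i : ℕ) : ℤ))) (σ j) j)
      = ∏ j : Fin a, ∑ S ∈ EF N ((b : ℤ) + (j : ℕ) - ((σ j : ℕ) : ℤ)), wt x S :=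
    Finset.prod_congr rfl fun j _ => esymZ_eq_sum _ _ _
  rw [this, Finset.prod_univ_sum, Finset.smul_sum]
  refine Finset.sum_congr rfl fun S _ => ?_
  rw [Units.smul_def, zsmul_eq_mul]
  rfl

/-! ### The tail-swap involution -/

/-- tail-swap of columns `i` and `j` of the configuration at time `t` -/
def swapAt {a : ℕ} (c : Cfg a) (i j : Fin a) (t : ℕ) : Cfg a :=
  ⟨c.1 * Equiv.swap i j, fun k =>
    if k = i then (c.2 i ∩ Finset.range t) ∪ (c.2 j \ Finset.range t)
    else if k = j then (c.2 j ∩ Finset.range t) ∪ (c.2 i \ Finset.range t)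
    else c.2 k⟩

lemma swapAt_inter_lo {a : ℕ} (c : Cfg a) (i j : Fin a) (t t' : ℕ) (h : t' ≤ t) (k : Fin a) :
    (swapAt c i j t).2 k ∩ Finset.range t' = c.2 k ∩ Finset.range t' := by
  have key : ∀ A B : Finset ℕ, ((A ∩ Finset.range t) ∪ (B \ Finset.range t)) ∩ Finset.range t'
      = A ∩ Finset.range t' := by
    intro A B
    ext u
    simp only [Finset.mem_inter, Finset.mem_union, Finset.mem_sdiff, Finset.mem_range]
    constructor
    · rintro ⟨⟨hA, _⟩ | ⟨_, hB⟩, hu⟩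
      · exact ⟨hA, hu⟩
      · omega
    · rintro ⟨hA, hu⟩
      exact ⟨Or.inl ⟨hA, by omega⟩, hu⟩
  unfold swapAt
  dsimp only
  split_ifs with h1 h2 <;> [skip; skip; rfl]
  · subst h1; exact key _ _
  · subst h2; exact key _ _

lemma pf_swapAt_lo {a : ℕ} (c : Cfg a) (i j : Fin a) (t t' : ℕ) (h : t' ≤ t) (k : Fin a) :
    pf (swapAt c i j t) k t' = pf c k t' := by
  unfold pf; rw [swapAt_inter_lo c i j t t' h k]

lemma swapAt_hi {a : ℕ} (c : Cfg a) (i j : Fin a) (t t' : ℕ) (h : t ≤ t')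
    (A B : Finset ℕ) :
    ((A ∩ Finset.range t) ∪ (B \ Finset.range t)) ∩ Finset.range t'
      = (A ∩ Finset.range t) ∪ ((B ∩ Finset.range t') \ (B ∩ Finset.range t)) := by
  ext u
  simp only [Finset.mem_inter, Finset.mem_union, Finset.mem_sdiff, Finset.mem_range]
  constructor
  · rintro ⟨⟨hA, hu⟩ | ⟨hB, hu⟩, hu'⟩
    · exact Or.inl ⟨hA, hu⟩
    · exact Or.inr ⟨⟨hB, hu'⟩, fun hc => hu hc.2⟩
  · rintro (⟨hA, hu⟩ | ⟨⟨hB, hu'⟩, hu⟩)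
    · exact ⟨Or.inl ⟨hA, hu⟩, by omega⟩
    · exact ⟨Or.inr ⟨hB, fun hc => hu ⟨hB, hc⟩⟩, hu'⟩

lemma card_swap_hi {a : ℕ} (c : Cfg a) (i j : Fin a) (t t' : ℕ) (h : t ≤ t')
    (A B : Finset ℕ) :
    ((((A ∩ Finset.range t) ∪ (B \ Finset.range t)) ∩ Finset.range t').card : ℤ)
      = ((A ∩ Finset.range t).card : ℤ) + ((B ∩ Finset.range t').card : ℤ)
        - ((B ∩ Finset.range t).card : ℤ) := by
  rw [swapAt_hi c i j t t' h A B, Finset.card_union_of_disjoint, Finset.card_sdiff_of_subset]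
  · push_cast
    have hle : (B ∩ Finset.range t).card ≤ (B ∩ Finset.range t').card :=
      Finset.card_le_card (Finset.inter_subset_inter le_rfl
        (Finset.range_subset_range.2 h))
    omega
  · exact Finset.inter_subset_inter le_rfl (Finset.range_subset_range.2 h)
  · refine Finset.disjoint_left.2 fun u hu1 hu2 => ?_
    simp only [Finset.mem_inter, Finset.mem_sdiff, Finset.mem_range, not_and, not_lt] at hu1 hu2
    exact absurd hu1.2 (not_lt.2 (hu2.2 hu2.1.1))

/-- heights above a crossing time get exchanged -/
lemma pf_swapAt_hi {a : ℕ} (c : Cfg a) (i j : Fin a) (t : ℕ)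
    (hij : i ≠ j) (hcross : pf c i t = pf c j t) (t' : ℕ) (h : t ≤ t') :
    pf (swapAt c i j t) i t' = pf c j t' ∧
    pf (swapAt c i j t) j t' = pf c i t' ∧
    ∀ k, k ≠ i → k ≠ j → pf (swapAt c i j t) k t' = pf c k t' := by
  unfold pf at hcross ⊢
  unfold swapAt
  dsimp only
  refine ⟨?_, ?_, fun k hk1 hk2 => by rw [if_neg hk1, if_neg hk2]⟩
  · rw [if_pos rfl, card_swap_hi c i j t t' h]; omega
  · rw [if_neg (Ne.symm hij), if_pos rfl, card_swap_hi c i j t t' h]; omega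

lemma swapAt_fst {a : ℕ} (c : Cfg a) (i j : Fin a) (t : ℕ) :
    (swapAt c i j t).1 = c.1 * Equiv.swap i j := rfl

lemma swapAt_apply_i {a : ℕ} (c : Cfg a) (i j : Fin a) (t : ℕ) :
    (swapAt c i j t).2 i = (c.2 i ∩ Finset.range t) ∪ (c.2 j \ Finset.range t) := if_pos rfl

lemma swapAt_apply_j {a : ℕ} (c : Cfg a) (i j : Fin a) (t : ℕ) (hij : i ≠ j) :
    (swapAt c i j t).2 j = (c.2 j ∩ Finset.range t) ∪ (c.2 i \ Finset.range t) := by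
  unfold swapAt; dsimp only; rw [if_neg (Ne.symm hij), if_pos rfl]

lemma swapAt_apply_other {a : ℕ} (c : Cfg a) (i j k : Fin a) (t : ℕ)
    (h1 : k ≠ i) (h2 : k ≠ j) : (swapAt c i j t).2 k = c.2 k := by
  unfold swapAt; dsimp only; rw [if_neg h1, if_neg h2]

lemma untwist (A B : Finset ℕ) (t : ℕ) :
    (((A ∩ Finset.range t) ∪ (B \ Finset.range t)) ∩ Finset.range t)
      ∪ (((B ∩ Finset.range t) ∪ (A \ Finset.range t)) \ Finset.range t) = A := by
  ext u
  simp only [Finset.mem_union, Finset.mem_inter, Finset.mem_sdiff, Finset.mem_range]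
  by_cases hut : u < t <;> simp [hut]

lemma swapAt_swapAt {a : ℕ} (c : Cfg a) (i j : Fin a) (t : ℕ) (hij : i ≠ j) :
    swapAt (swapAt c i j t) i j t = c := by
  refine Sigma.ext ?_ (heq_of_eq ?_)
  · rw [swapAt_fst, swapAt_fst, mul_assoc, Equiv.swap_mul_self, mul_one]
  · funext k
    by_cases h1 : k = i
    · subst h1
      rw [swapAt_apply_i, swapAt_apply_i, swapAt_apply_j _ _ _ _ hij]
      exact untwist _ _ _
    · by_cases h2 : k = j
      · subst h2
        rw [swapAt_apply_j _ _ _ _ hij, swapAt_apply_j _ _ _ _ hij, swapAt_apply_i]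
        exact untwist _ _ _
      · rw [swapAt_apply_other _ _ _ _ _ h1 h2, swapAt_apply_other _ _ _ _ _ h1 h2]


lemma inter_range_eq_self {N T : ℕ} {S : Finset ℕ} (hS : S ⊆ Finset.range N) (h : N ≤ T) :
    S ∩ Finset.range T = S :=
  Finset.inter_eq_left.2 (hS.trans (Finset.range_subset_range.2 h))

lemma swapAt_mem_CS {a b N : ℕ} {c : Cfg a} (hc : c ∈ CS a b N) {i j : Fin a} (hij : i ≠ j)
    {t : ℕ} (hcross : pf c i t = pf c j t) : swapAt c i j t ∈ CS a b N := by
  rw [mem_CS] at hc ⊢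
  have hT : N ≤ max N t := le_max_left _ _
  have htT : t ≤ max N t := le_max_right _ _
  obtain ⟨h1, h2, h3⟩ := pf_swapAt_hi c i j t hij hcross (max N t) htT
  have hsub : ∀ k, (swapAt c i j t).2 k ⊆ Finset.range N := by
    intro k
    by_cases e1 : k = i
    · rw [e1, swapAt_apply_i]
      exact Finset.union_subset ((Finset.inter_subset_left).trans (hc i).1)
        ((Finset.sdiff_subset).trans (hc j).1)
    · by_cases e2 : k = j
      · rw [e2, swapAt_apply_j _ _ _ _ hij]
        exact Finset.union_subset ((Finset.inter_subset_left).trans (hc j).1)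
          ((Finset.sdiff_subset).trans (hc i).1)
      · rw [swapAt_apply_other _ _ _ _ _ e1 e2]; exact (hc k).1
  have hpf : ∀ (d : Cfg a), (∀ k : Fin a, d.2 k ⊆ Finset.range N) → ∀ k,
      pf d k (max N t) = ((k : ℕ) : ℤ) - ((d.2 k).card : ℤ) := by
    intro d hd k
    unfold pf
    rw [inter_range_eq_self (hd k) hT]
  intro k
  refine ⟨hsub k, ?_⟩
  have hfst : ∀ k : Fin a, (swapAt c i j t).1 k = c.1 (Equiv.swap i j k) := fun k => rfl
  by_cases e1 : k = i
  · rw [e1]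
    have := h1
    rw [hpf _ hsub i, hpf c (fun k => (hc k).1) j] at this
    rw [hfst, Equiv.swap_apply_left]
    have hcj := (hc j).2
    omega
  · by_cases e2 : k = j
    · rw [e2]
      have := h2
      rw [hpf _ hsub j, hpf c (fun k => (hc k).1) i] at this
      rw [hfst, Equiv.swap_apply_right]
      have hci := (hc i).2
      omega
    · have := h3 k e1 e2
      rw [hpf _ hsub k, hpf c (fun k => (hc k).1) k] at this
      rw [hfst, Equiv.swap_apply_of_ne_of_ne e1 e2]
      have hck := (hc k).2
      omega

lemma inter_union_sdiff' (A R : Finset ℕ) : (A ∩ R) ∪ (A \ R) = A := by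
  ext u
  simp only [Finset.mem_union, Finset.mem_inter, Finset.mem_sdiff]
  tauto

lemma wt_swap_pair (x : ℕ → ℝ) (A B : Finset ℕ) (t : ℕ) :
    wt x ((A ∩ Finset.range t) ∪ (B \ Finset.range t))
      * wt x ((B ∩ Finset.range t) ∪ (A \ Finset.range t)) = wt x A * wt x B := by
  have hd : ∀ C D : Finset ℕ, Disjoint (C ∩ Finset.range t) (D \ Finset.range t) := by
    intro C D
    refine Finset.disjoint_left.2 fun u hu1 hu2 => ?_
    rw [Finset.mem_inter] at hu1
    rw [Finset.mem_sdiff] at hu2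
    exact hu2.2 hu1.2
  unfold wt
  rw [Finset.prod_union (hd A B), Finset.prod_union (hd B A)]
  have hA : (∏ u ∈ A, x u) = (∏ u ∈ A ∩ Finset.range t, x u) * ∏ u ∈ A \ Finset.range t, x u := by
    rw [← Finset.prod_union (hd A A), inter_union_sdiff']
  have hB : (∏ u ∈ B, x u) = (∏ u ∈ B ∩ Finset.range t, x u) * ∏ u ∈ B \ Finset.range t, x u := by
    rw [← Finset.prod_union (hd B B), inter_union_sdiff']
  rw [hA, hB]
  ring

lemma cwt_swapAt {a : ℕ} (x : ℕ → ℝ) (c : Cfg a) {i j : Fin a} (hij : i < j) (t : ℕ) :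
    cwt x (swapAt c i j t) = - cwt x c := by
  have hne : i ≠ j := ne_of_lt hij
  unfold cwt
  rw [swapAt_fst, Equiv.Perm.sign_mul, Equiv.Perm.sign_swap hne]
  have hprod : ∏ k : Fin a, wt x ((swapAt c i j t).2 k) = ∏ k : Fin a, wt x (c.2 k) := by
    rw [← Finset.mul_prod_erase Finset.univ _ (Finset.mem_univ i),
      ← Finset.mul_prod_erase _ _ (Finset.mem_erase.2 ⟨Ne.symm hne, Finset.mem_univ j⟩),
      ← Finset.mul_prod_erase Finset.univ (fun k => wt x (c.2 k)) (Finset.mem_univ i),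
      ← Finset.mul_prod_erase _ (fun k => wt x (c.2 k))
        (Finset.mem_erase.2 ⟨Ne.symm hne, Finset.mem_univ j⟩)]
    have : ∏ k ∈ (Finset.univ.erase i).erase j, wt x ((swapAt c i j t).2 k)
        = ∏ k ∈ (Finset.univ.erase i).erase j, wt x (c.2 k) := by
      refine Finset.prod_congr rfl fun k hk => ?_
      rw [Finset.mem_erase, Finset.mem_erase] at hk
      rw [swapAt_apply_other _ _ _ _ _ hk.2.1 hk.1]
    rw [this, swapAt_apply_i, swapAt_apply_j _ _ _ _ hne, ← mul_assoc, ← mul_assoc,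
      wt_swap_pair]
  rw [hprod]
  push_cast
  ring

/-! ### choosing the canonical crossing -/

/-- there is a crossing at time `t` -/
def Q {a : ℕ} (c : Cfg a) (t : ℕ) : Prop :=
  ∃ p : Fin a × Fin a, p.1 < p.2 ∧ pf c p.1 t = pf c p.2 t

instance {a : ℕ} (c : Cfg a) (t : ℕ) : Decidable (Q c t) := by
  unfold Q; exact Fintype.decidableExistsFintype

lemma not_NC_iff {a : ℕ} {c : Cfg a} : ¬ NC c ↔ ∃ t, Q c t := by
  unfold NC Q
  push_neg
  constructor
  · rintro ⟨i, j, hij, t, ht⟩; exact ⟨t, (i, j), hij, ht⟩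
  · rintro ⟨t, p, hp, ht⟩; exact ⟨p.1, p.2, hp, t, ht⟩

/-- the pairs crossing at time `t` -/
def pairs {a : ℕ} (c : Cfg a) (t : ℕ) : Finset (Fin a × Fin a) :=
  Finset.univ.filter fun p => p.1 < p.2 ∧ pf c p.1 t = pf c p.2 t

lemma pairs_nonempty {a : ℕ} {c : Cfg a} {t : ℕ} (h : Q c t) : (pairs c t).Nonempty := by
  obtain ⟨p, h1, h2⟩ := h
  exact ⟨p, Finset.mem_filter.2 ⟨Finset.mem_univ _, h1, h2⟩⟩

/-- first component of the canonical crossing pair -/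
def cr1 {a : ℕ} (c : Cfg a) (t : ℕ) (h : (pairs c t).Nonempty) : Fin a :=
  ((pairs c t).image Prod.fst).min' (h.image _)

/-- second component of the canonical crossing pair -/
def cr2 {a : ℕ} (c : Cfg a) (t : ℕ) (h : (pairs c t).Nonempty) : Fin a :=
  (((pairs c t).filter fun p => p.1 = cr1 c t h).image Prod.snd).min'
    (by
      have h1 : cr1 c t h ∈ (pairs c t).image Prod.fst := Finset.min'_mem _ _
      obtain ⟨p, hp, hp1⟩ := Finset.mem_image.1 h1
      exact ⟨p.2, Finset.mem_image.2 ⟨p, Finset.mem_filter.2 ⟨hp, hp1⟩, rfl⟩⟩)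

lemma cr_mem_pairs {a : ℕ} (c : Cfg a) (t : ℕ) (h : (pairs c t).Nonempty) :
    (cr1 c t h, cr2 c t h) ∈ pairs c t := by
  have h2 : cr2 c t h ∈ ((pairs c t).filter fun p => p.1 = cr1 c t h).image Prod.snd :=
    Finset.min'_mem _ _
  obtain ⟨p, hp, hp2⟩ := Finset.mem_image.1 h2
  rw [Finset.mem_filter] at hp
  have : p = (cr1 c t h, cr2 c t h) := Prod.ext hp.2 hp2
  rw [← this]
  exact hp.1

lemma cr1_lt_cr2 {a : ℕ} (c : Cfg a) (t : ℕ) (h : (pairs c t).Nonempty) :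
    cr1 c t h < cr2 c t h :=
  (Finset.mem_filter.1 (cr_mem_pairs c t h)).2.1

lemma pf_cr_eq {a : ℕ} (c : Cfg a) (t : ℕ) (h : (pairs c t).Nonempty) :
    pf c (cr1 c t h) t = pf c (cr2 c t h) t :=
  (Finset.mem_filter.1 (cr_mem_pairs c t h)).2.2

lemma pairs_congr {a : ℕ} {c c' : Cfg a} {t : ℕ} (h : ∀ k, pf c k t = pf c' k t) :
    pairs c t = pairs c' t := by
  unfold pairs
  refine Finset.filter_congr fun p _ => ?_
  rw [h p.1, h p.2]

lemma Q_congr {a : ℕ} {c c' : Cfg a} {t : ℕ} (h : ∀ k, pf c k t = pf c' k t) :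
    Q c t ↔ Q c' t := by
  unfold Q
  constructor
  · rintro ⟨p, h1, h2⟩
    exact ⟨p, h1, by rw [← h p.1, ← h p.2]; exact h2⟩
  · rintro ⟨p, h1, h2⟩
    exact ⟨p, h1, by rw [h p.1, h p.2]; exact h2⟩

lemma cr1_congr {a : ℕ} {c c' : Cfg a} {t : ℕ} (hp : pairs c t = pairs c' t)
    (h : (pairs c t).Nonempty) (h' : (pairs c' t).Nonempty) :
    cr1 c t h = cr1 c' t h' := by
  unfold cr1
  congr 1
  rw [hp]

lemma cr2_congr {a : ℕ} {c c' : Cfg a} {t : ℕ} (hp : pairs c t = pairs c' t)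
    (h : (pairs c t).Nonempty) (h' : (pairs c' t).Nonempty) :
    cr2 c t h = cr2 c' t h' := by
  unfold cr2
  have h1 : cr1 c t h = cr1 c' t h' := cr1_congr hp h h'
  congr 1
  rw [hp, h1]

/-- the canonical crossing time -/
noncomputable def cT {a : ℕ} (c : Cfg a) (h : ∃ t, Q c t) : ℕ := Nat.find h

/-- the sign-reversing involution -/
noncomputable def iota {a : ℕ} (c : Cfg a) (h : ∃ t, Q c t) : Cfg a :=
  swapAt c (cr1 c (cT c h) (pairs_nonempty (Nat.find_spec h)))
    (cr2 c (cT c h) (pairs_nonempty (Nat.find_spec h))) (cT c h)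

lemma iota_spec {a : ℕ} (c : Cfg a) (h : ∃ t, Q c t) :
    ∃ (hne : (pairs c (cT c h)).Nonempty),
      iota c h = swapAt c (cr1 c (cT c h) hne) (cr2 c (cT c h) hne) (cT c h) :=
  ⟨pairs_nonempty (Nat.find_spec h), rfl⟩

lemma cwt_iota {a : ℕ} (x : ℕ → ℝ) (c : Cfg a) (h : ∃ t, Q c t) :
    cwt x (iota c h) = - cwt x c :=
  cwt_swapAt x c (cr1_lt_cr2 _ _ _) _

lemma iota_mem_CS {a b N : ℕ} {c : Cfg a} (hc : c ∈ CS a b N) (h : ∃ t, Q c t) :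
    iota c h ∈ CS a b N :=
  swapAt_mem_CS hc (ne_of_lt (cr1_lt_cr2 _ _ _)) (pf_cr_eq _ _ _)

lemma iota_crossing {a : ℕ} (c : Cfg a) (h : ∃ t, Q c t) :
    Q (iota c h) (cT c h) := by
  obtain ⟨hne, heq⟩ := iota_spec c h
  set t0 := cT c h
  set i := cr1 c t0 hne
  set j := cr2 c t0 hne
  have hij : i ≠ j := ne_of_lt (cr1_lt_cr2 _ _ _)
  obtain ⟨h1, h2, _⟩ := pf_swapAt_hi c i j t0 hij (pf_cr_eq _ _ _) t0 le_rfl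
  refine ⟨(i, j), cr1_lt_cr2 _ _ _, ?_⟩
  rw [heq]
  dsimp only
  rw [h1, h2, pf_cr_eq]

lemma not_NC_iota {a : ℕ} (c : Cfg a) (h : ∃ t, Q c t) : ¬ NC (iota c h) :=
  not_NC_iff.2 ⟨cT c h, iota_crossing c h⟩

lemma iota_pf_lo {a : ℕ} (c : Cfg a) (h : ∃ t, Q c t) (k : Fin a) (t' : ℕ)
    (ht' : t' ≤ cT c h) : pf (iota c h) k t' = pf c k t' :=
  pf_swapAt_lo _ _ _ _ _ ht' _

lemma cT_iota {a : ℕ} (c : Cfg a) (h : ∃ t, Q c t) (h' : ∃ t, Q (iota c h) t) :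
    cT (iota c h) h' = cT c h := by
  have hle : cT (iota c h) h' ≤ cT c h := Nat.find_min' h' (iota_crossing c h)
  refine le_antisymm hle ?_
  by_contra hlt
  push_neg at hlt
  have hQ : Q (iota c h) (cT (iota c h) h') := Nat.find_spec h'
  have : Q c (cT (iota c h) h') := by
    rw [Q_congr (fun k => (iota_pf_lo c h k _ hle).symm)]
    exact hQ
  exact Nat.find_min h hlt this

lemma iota_iota {a : ℕ} (c : Cfg a) (h : ∃ t, Q c t) (h' : ∃ t, Q (iota c h) t) :
    iota (iota c h) h' = c := by
  obtain ⟨hne, hiota⟩ := iota_spec c h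
  obtain ⟨hne', hiota'⟩ := iota_spec (iota c h) h'
  have hT : cT (iota c h) h' = cT c h := cT_iota c h h'
  have hpairs : pairs (iota c h) (cT c h) = pairs c (cT c h) :=
    pairs_congr fun k => iota_pf_lo c h k _ le_rfl
  have hne'' : (pairs (iota c h) (cT c h)).Nonempty := by rw [hpairs]; exact hne
  have h1 : cr1 (iota c h) (cT (iota c h) h') hne' = cr1 c (cT c h) hne := by
    rw [(cr1_congr (t := cT c h) hpairs hne'' hne).symm]
    congr 1
  have h2 : cr2 (iota c h) (cT (iota c h) h') hne' = cr2 c (cT c h) hne := by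
    rw [(cr2_congr (t := cT c h) hpairs hne'' hne).symm]
    congr 1
  rw [hiota', h1, h2, hT, hiota]
  exact swapAt_swapAt _ _ _ _ (ne_of_lt (cr1_lt_cr2 _ _ _))

lemma iota_ne {a : ℕ} (c : Cfg a) (h : ∃ t, Q c t) : iota c h ≠ c := by
  obtain ⟨hne, hiota⟩ := iota_spec c h
  intro heq
  have hfst : (iota c h).1 = c.1 := congrArg Sigma.fst heq
  rw [hiota, swapAt_fst] at hfst
  have : Equiv.swap (cr1 c (cT c h) hne) (cr2 c (cT c h) hne) = 1 :=
    mul_left_cancel (a := c.1) (by rw [mul_one]; exact hfst)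
  have := Equiv.swap_eq_one_iff.1 this
  exact (ne_of_lt (cr1_lt_cr2 c (cT c h) hne)) this

lemma sum_cross_zero (a b N : ℕ) (x : ℕ → ℝ) [DecidablePred (NC (a := a))] :
    ∑ c ∈ (CS a b N).filter (fun c => ¬ NC c), cwt x c = 0 := by
  have hex : ∀ c ∈ (CS a b N).filter (fun c => ¬ NC c), ∃ t, Q c t := by
    intro c hc
    exact not_NC_iff.1 (Finset.mem_filter.1 hc).2
  refine Finset.sum_involution (fun c hc => iota c (hex c hc)) ?_ ?_ ?_ ?_
  · intro c hc
    rw [cwt_iota]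
    ring
  · intro c hc _
    exact iota_ne c (hex c hc)
  · intro c hc
    exact Finset.mem_filter.2
      ⟨iota_mem_CS (Finset.mem_filter.1 hc).1 _, not_NC_iota c (hex c hc)⟩
  · intro c hc
    exact iota_iota c (hex c hc) _


/-! ### from non-crossing configurations to tableaux -/

lemma mem_rect {a b i j : ℕ} : (i, j) ∈ rectDiagram a b ↔ i < b ∧ j < a := by
  have : (i, j) ∈ rectDiagram a b ↔ (i, j) ∈ (rectDiagram a b).cells := Iff.rfl
  rw [this]
  show (i, j) ∈ Finset.range b ×ˢ Finset.range a ↔ _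
  rw [Finset.mem_product, Finset.mem_range, Finset.mem_range]

lemma emb_surj {S : Finset ℕ} {b : ℕ} (hS : S.card = b) {u : ℕ} (hu : u ∈ S) :
    ∃ m : Fin b, S.orderEmbOfFin hS m = u := by
  have h := Finset.range_orderEmbOfFin S hS
  have : u ∈ Set.range (S.orderEmbOfFin hS) := by rw [h]; exact hu
  exact this

lemma dom_of_counts {b : ℕ} {S T : Finset ℕ} (hS : S.card = b) (hT : T.card = b)
    (h : ∀ t, (T ∩ Finset.range t).card ≤ (S ∩ Finset.range t).card) (k : Fin b) :
    S.orderEmbOfFin hS k ≤ T.orderEmbOfFin hT k := by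
  by_contra hlt
  push_neg at hlt
  set v := T.orderEmbOfFin hT k with hv
  have h1 : (k : ℕ) + 1 ≤ (T ∩ Finset.range (v + 1)).card := by
    have hinj : Function.Injective
        (fun m : Fin ((k : ℕ) + 1) => T.orderEmbOfFin hT ⟨m.1, lt_of_le_of_lt (Nat.lt_succ_iff.1 m.2) k.2⟩) := by
      intro m m' hmm
      have h0 := (T.orderEmbOfFin hT).injective hmm
      have hv : (m : ℕ) = (m' : ℕ) := by
        have := congrArg Fin.val h0
        simpa using this
      exact Fin.ext hv
    have hcard : ((Finset.univ : Finset (Fin ((k : ℕ) + 1))).image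
        (fun m : Fin ((k : ℕ) + 1) => T.orderEmbOfFin hT ⟨m.1, lt_of_le_of_lt (Nat.lt_succ_iff.1 m.2) k.2⟩)).card
        = (k : ℕ) + 1 := by
      rw [Finset.card_image_of_injective _ hinj, Finset.card_univ, Fintype.card_fin]
    rw [← hcard]
    refine Finset.card_le_card fun u hu => ?_
    obtain ⟨m, _, rfl⟩ := Finset.mem_image.1 hu
    refine Finset.mem_inter.2 ⟨Finset.orderEmbOfFin_mem _ _ _, Finset.mem_range.2 ?_⟩
    have hle : (⟨m.1, lt_of_le_of_lt (Nat.lt_succ_iff.1 m.2) k.2⟩ : Fin b) ≤ k :=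
      Nat.lt_succ_iff.1 m.2
    have := (T.orderEmbOfFin hT).monotone hle
    omega
  have h2 : (S ∩ Finset.range (v + 1)).card ≤ (k : ℕ) := by
    have hsub : S ∩ Finset.range (v + 1) ⊆
        (Finset.univ : Finset (Fin (k : ℕ))).image
          (fun m : Fin (k : ℕ) => S.orderEmbOfFin hS ⟨m.1, lt_trans m.2 k.2⟩) := by
      intro u hu
      rw [Finset.mem_inter, Finset.mem_range] at hu
      obtain ⟨m, hm⟩ := emb_surj hS hu.1
      have hmk : (m : ℕ) < (k : ℕ) := by
        by_contra hge
        push_neg at hge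
        have : S.orderEmbOfFin hS k ≤ S.orderEmbOfFin hS m := (S.orderEmbOfFin hS).monotone hge
        omega
      refine Finset.mem_image.2 ⟨⟨m.1, hmk⟩, Finset.mem_univ _, ?_⟩
      rw [← hm]
    calc (S ∩ Finset.range (v + 1)).card ≤ _ := Finset.card_le_card hsub
      _ ≤ (Finset.univ : Finset (Fin (k : ℕ))).card := Finset.card_image_le
      _ = (k : ℕ) := by rw [Finset.card_univ, Fintype.card_fin]
  have h3 := h (v + 1)
  omega

/-- build a tableau from a tuple of `b`-element column sets -/
def mkT (a b : ℕ) (S : Fin a → Finset ℕ) (hb : ∀ j, (S j).card = b)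
    (hdom : ∀ j1 j2 : Fin a, j1 ≤ j2 → ∀ k : Fin b,
      (S j1).orderEmbOfFin (hb j1) k ≤ (S j2).orderEmbOfFin (hb j2) k) :
    SemistandardYoungTableau (rectDiagram a b) where
  entry i j := if h : i < b ∧ j < a then (S ⟨j, h.2⟩).orderEmbOfFin (hb _) ⟨i, h.1⟩ else 0
  row_weak' := by
    intro i j1 j2 hj hcell
    rw [mem_rect] at hcell
    have hj1 : j1 < a := lt_trans hj hcell.2
    rw [dif_pos ⟨hcell.1, hj1⟩, dif_pos ⟨hcell.1, hcell.2⟩]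
    exact hdom ⟨j1, hj1⟩ ⟨j2, hcell.2⟩ (le_of_lt hj) ⟨i, hcell.1⟩
  col_strict' := by
    intro i1 i2 j hi hcell
    rw [mem_rect] at hcell
    have hi1 : i1 < b := lt_trans hi hcell.1
    rw [dif_pos ⟨hi1, hcell.2⟩, dif_pos ⟨hcell.1, hcell.2⟩]
    exact ((S ⟨j, hcell.2⟩).orderEmbOfFin (hb _)).strictMono (show (⟨i1, hi1⟩ : Fin b) < ⟨i2, hcell.1⟩ from hi)
  zeros' := by
    intro i j h
    rw [mem_rect] at h
    exact dif_neg h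


lemma pf_zero {a : ℕ} (c : Cfg a) (k : Fin a) : pf c k 0 = ((k : ℕ) : ℤ) := by
  unfold pf
  rw [Finset.range_zero, Finset.inter_empty, Finset.card_empty]
  simp

lemma pf_succ_bounds {a : ℕ} (c : Cfg a) (k : Fin a) (t : ℕ) :
    pf c k t - 1 ≤ pf c k (t + 1) ∧ pf c k (t + 1) ≤ pf c k t := by
  unfold pf
  have h1 : c.2 k ∩ Finset.range t ⊆ c.2 k ∩ Finset.range (t + 1) :=
    Finset.inter_subset_inter le_rfl (Finset.range_subset_range.2 (Nat.le_succ t))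
  have h2 : c.2 k ∩ Finset.range (t + 1) ⊆ insert t (c.2 k ∩ Finset.range t) := by
    intro u hu
    rw [Finset.mem_inter, Finset.mem_range] at hu
    rcases Nat.lt_succ_iff_lt_or_eq.1 hu.2 with h | h
    · exact Finset.mem_insert.2 (Or.inr (Finset.mem_inter.2 ⟨hu.1, Finset.mem_range.2 h⟩))
    · exact Finset.mem_insert.2 (Or.inl h)
  have hc1 := Finset.card_le_card h1
  have hc2 := (Finset.card_le_card h2).trans (Finset.card_insert_le _ _)
  omega

lemma NC_strictMono {a : ℕ} {c : Cfg a} (hnc : NC c) (t : ℕ) :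
    StrictMono fun k : Fin a => pf c k t := by
  induction t with
  | zero =>
    intro i j hij
    dsimp only
    rw [pf_zero, pf_zero]
    exact_mod_cast hij
  | succ t ih =>
    intro i j hij
    have h1 := ih hij
    have h2 := pf_succ_bounds c i t
    have h3 := pf_succ_bounds c j t
    have h4 := hnc i j hij (t + 1)
    dsimp only at h1 ⊢
    omega

lemma pf_top {a b N : ℕ} {c : Cfg a} (hc : c ∈ CS a b N) (k : Fin a) :
    pf c k N = ((c.1 k : ℕ) : ℤ) - (b : ℤ) := by
  unfold pf
  rw [inter_range_eq_self ((mem_CS.1 hc) k).1 le_rfl]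
  have := ((mem_CS.1 hc) k).2
  omega

lemma NC_perm_eq_one {a b N : ℕ} {c : Cfg a} (hc : c ∈ CS a b N) (hnc : NC c) :
    c.1 = 1 := by
  have hstrict : ∀ i j : Fin a, i < j → ((c.1 i : ℕ) : ℤ) < ((c.1 j : ℕ) : ℤ) := by
    intro i j hij
    have := NC_strictMono hnc N hij
    dsimp only at this
    rw [pf_top hc, pf_top hc] at this
    omega
  have hle : ∀ n : ℕ, ∀ k : Fin a, (k : ℕ) = n → n ≤ (c.1 k : ℕ) := by
    intro n
    induction n with
    | zero => intro k _; exact Nat.zero_le _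
    | succ m ih =>
      intro k hk
      have hk2 := k.isLt
      have hma : m < a := by omega
      have hlt : (⟨m, hma⟩ : Fin a) < k := by
        rw [Fin.lt_def]
        show m < (k : ℕ)
        omega
      have h1 := hstrict _ _ hlt
      have h2 := ih ⟨m, hma⟩ rfl
      omega
  have hsum : ∑ k : Fin a, ((c.1 k : ℕ)) = ∑ k : Fin a, (k : ℕ) :=
    Equiv.sum_comp c.1 (fun k : Fin a => (k : ℕ))
  have hpt : ∀ k ∈ (Finset.univ : Finset (Fin a)), (k : ℕ) ≤ (c.1 k : ℕ) :=
    fun k _ => hle (k : ℕ) k rfl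
  have := (Finset.sum_eq_sum_iff_of_le hpt).1 hsum.symm
  refine Equiv.ext fun k => Fin.ext ?_
  exact (this k (Finset.mem_univ k)).symm

lemma NC_card {a b N : ℕ} {c : Cfg a} (hc : c ∈ CS a b N) (hnc : NC c) (k : Fin a) :
    (c.2 k).card = b := by
  have h1 := ((mem_CS.1 hc) k).2
  rw [NC_perm_eq_one hc hnc] at h1
  simp only [Equiv.Perm.one_apply] at h1
  omega

lemma NC_counting {a b N : ℕ} {c : Cfg a} (hc : c ∈ CS a b N) (hnc : NC c) :
    ∀ i j : Fin a, i ≤ j → ∀ t : ℕ,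
      ((c.2 j ∩ Finset.range t).card) ≤ ((c.2 i ∩ Finset.range t).card) := by
  have hadj : ∀ i j : Fin a, i < j → ∀ t : ℕ,
      ((c.2 j ∩ Finset.range t).card : ℤ) ≤ ((c.2 i ∩ Finset.range t).card : ℤ) + ((j : ℕ) : ℤ) - ((i : ℕ) : ℤ) - 1 := by
    intro i j hij t
    have := NC_strictMono hnc t hij
    unfold pf at this
    dsimp only at this
    omega
  intro i j hij t
  rcases eq_or_lt_of_le hij with h | h
  · rw [h]
  · -- chain through intermediate columns
    have key : ∀ d : ℕ, ∀ i j : Fin a, (j : ℕ) = (i : ℕ) + d →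
        ((c.2 j ∩ Finset.range t).card) ≤ ((c.2 i ∩ Finset.range t).card) := by
      intro d
      induction d with
      | zero =>
        intro i j hj
        have : i = j := Fin.ext (by omega)
        rw [this]
      | succ m ih =>
        intro i j hj
        have hma : (i : ℕ) + m < a := by have := j.2; omega
        have h1 := ih i ⟨(i : ℕ) + m, hma⟩ rfl
        have h2 := hadj ⟨(i : ℕ) + m, hma⟩ j (by rw [Fin.lt_def]; dsimp only; omega) t
        dsimp only at h2
        omega
    exact key ((j : ℕ) - (i : ℕ)) i j (by have := Fin.lt_def.1 h; omega)


/-- the configuration associated with a tableau -/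
def toCfg {a b : ℕ} (T : SemistandardYoungTableau (rectDiagram a b)) : Cfg a :=
  ⟨1, fun j => (Finset.univ : Finset (Fin b)).image fun i : Fin b => T (i : ℕ) (j : ℕ)⟩

lemma col_strictMono {a b : ℕ} (T : SemistandardYoungTableau (rectDiagram a b)) (j : Fin a) :
    StrictMono (fun i : Fin b => T (i : ℕ) (j : ℕ)) := fun i1 i2 h =>
  T.col_strict (show (i1 : ℕ) < (i2 : ℕ) from h) (mem_rect.2 ⟨i2.isLt, j.isLt⟩)

lemma toCfg_card {a b : ℕ} (T : SemistandardYoungTableau (rectDiagram a b)) (j : Fin a) :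
    ((toCfg T).2 j).card = b := by
  show ((Finset.univ : Finset (Fin b)).image fun i : Fin b => T (i : ℕ) (j : ℕ)).card = b
  rw [Finset.card_image_of_injective _ (col_strictMono T j).injective, Finset.card_univ,
    Fintype.card_fin]

lemma toCfg_inter_card {a b : ℕ} (T : SemistandardYoungTableau (rectDiagram a b))
    (j : Fin a) (t : ℕ) :
    ((toCfg T).2 j ∩ Finset.range t) =
      (Finset.univ.filter fun i : Fin b => T (i : ℕ) (j : ℕ) < t).image
        (fun i : Fin b => T (i : ℕ) (j : ℕ)) := by
  ext u
  show u ∈ ((Finset.univ : Finset (Fin b)).image fun i : Fin b => T (i : ℕ) (j : ℕ))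
      ∩ Finset.range t ↔ _
  rw [Finset.mem_inter, Finset.mem_image, Finset.mem_range, Finset.mem_image]
  constructor
  · rintro ⟨⟨i, _, rfl⟩, h2⟩
    exact ⟨i, Finset.mem_filter.2 ⟨Finset.mem_univ _, h2⟩, rfl⟩
  · rintro ⟨i, hi, rfl⟩
    exact ⟨⟨i, Finset.mem_univ _, rfl⟩, (Finset.mem_filter.1 hi).2⟩

lemma toCfg_counting {a b : ℕ} (T : SemistandardYoungTableau (rectDiagram a b))
    {i j : Fin a} (hij : i ≤ j) (t : ℕ) :
    ((toCfg T).2 j ∩ Finset.range t).card ≤ ((toCfg T).2 i ∩ Finset.range t).card := by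
  rw [toCfg_inter_card, toCfg_inter_card,
    Finset.card_image_of_injective _ (col_strictMono T j).injective,
    Finset.card_image_of_injective _ (col_strictMono T i).injective]
  refine Finset.card_le_card fun m hm => ?_
  rw [Finset.mem_filter] at hm ⊢
  refine ⟨Finset.mem_univ _, lt_of_le_of_lt ?_ hm.2⟩
  exact T.row_weak_of_le (show (i : ℕ) ≤ (j : ℕ) from hij) (mem_rect.2 ⟨m.isLt, j.isLt⟩)

lemma toCfg_mem {a b N : ℕ} (T : SemistandardYoungTableau (rectDiagram a b))
    (hT : ∀ i j, (i, j) ∈ rectDiagram a b → T i j < N) :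
    toCfg T ∈ CS a b N ∧ NC (toCfg T) := by
  constructor
  · rw [mem_CS]
    intro k
    constructor
    · intro u hu
      obtain ⟨i, _, rfl⟩ := Finset.mem_image.1 hu
      exact Finset.mem_range.2 (hT _ _ (mem_rect.2 ⟨i.isLt, k.isLt⟩))
    · rw [toCfg_card]
      show ((b : ℤ)) = (b : ℤ) + (k : ℕ) - (((1 : Equiv.Perm (Fin a)) k : ℕ) : ℤ)
      rw [Equiv.Perm.one_apply]
      ring
  · intro i j hij t
    have hcount := toCfg_counting T (le_of_lt hij) t
    unfold pf
    have hlt : (i : ℕ) < (j : ℕ) := hij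
    omega

/-- the tableau associated with a good configuration -/
noncomputable def fromCfg {a b : ℕ} (c : Cfg a) : SemistandardYoungTableau (rectDiagram a b) :=
  @dite _ ((∀ j, (c.2 j).card = b) ∧ (∀ i j : Fin a, i ≤ j → ∀ t : ℕ,
      ((c.2 j ∩ Finset.range t).card) ≤ ((c.2 i ∩ Finset.range t).card))) (Classical.dec _)
    (fun h => mkT a b c.2 h.1
      (fun j1 j2 hle k => dom_of_counts (h.1 j1) (h.1 j2) (fun t => h.2 j1 j2 hle t) k))
    (fun _ => default)

lemma fromCfg_eq {a b : ℕ} (c : Cfg a)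
    (h : (∀ j, (c.2 j).card = b) ∧ (∀ i j : Fin a, i ≤ j → ∀ t : ℕ,
      ((c.2 j ∩ Finset.range t).card) ≤ ((c.2 i ∩ Finset.range t).card))) :
    fromCfg c = mkT a b c.2 h.1
      (fun j1 j2 hle k => dom_of_counts (h.1 j1) (h.1 j2) (fun t => h.2 j1 j2 hle t) k) := by
  unfold fromCfg
  rw [dif_pos h]

lemma mkT_apply {a b : ℕ} (S : Fin a → Finset ℕ) (hb : ∀ j, (S j).card = b)
    (hdom : ∀ j1 j2 : Fin a, j1 ≤ j2 → ∀ k : Fin b,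
      (S j1).orderEmbOfFin (hb j1) k ≤ (S j2).orderEmbOfFin (hb j2) k)
    (i : Fin b) (j : Fin a) :
    mkT a b S hb hdom (i : ℕ) (j : ℕ) = (S j).orderEmbOfFin (hb j) i := by
  show (if h : (i : ℕ) < b ∧ (j : ℕ) < a
      then (S ⟨(j : ℕ), h.2⟩).orderEmbOfFin (hb _) ⟨(i : ℕ), h.1⟩ else 0) = _
  rw [dif_pos ⟨i.isLt, j.isLt⟩]

lemma fromCfg_toCfg {a b N : ℕ} (T : SemistandardYoungTableau (rectDiagram a b))
    (hT : ∀ i j, (i, j) ∈ rectDiagram a b → T i j < N) :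
    fromCfg (toCfg T) = T := by
  have h : (∀ j, ((toCfg T).2 j).card = b) ∧ (∀ i j : Fin a, i ≤ j → ∀ t : ℕ,
      (((toCfg T).2 j ∩ Finset.range t).card) ≤ (((toCfg T).2 i ∩ Finset.range t).card)) :=
    ⟨toCfg_card T, fun i j hij t => toCfg_counting T hij t⟩
  rw [fromCfg_eq _ h]
  ext i j
  by_cases hcell : i < b ∧ j < a
  · have hemb : (fun m : Fin b => T (m : ℕ) (j : ℕ)) =
        ((toCfg T).2 ⟨j, hcell.2⟩).orderEmbOfFin (h.1 ⟨j, hcell.2⟩) := by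
      refine Finset.orderEmbOfFin_unique _ (fun m => ?_) (col_strictMono T ⟨j, hcell.2⟩)
      exact Finset.mem_image.2 ⟨m, Finset.mem_univ _, rfl⟩
    have := mkT_apply (toCfg T).2 h.1
      (fun j1 j2 hle k => dom_of_counts (h.1 j1) (h.1 j2) (fun t => h.2 j1 j2 hle t) k)
      ⟨i, hcell.1⟩ ⟨j, hcell.2⟩
    rw [this, ← hemb]
  · have h1 : (i, j) ∉ rectDiagram a b := fun hmem => hcell (mem_rect.1 hmem)
    rw [SemistandardYoungTableau.zeros _ h1,
      SemistandardYoungTableau.zeros _ h1]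

lemma toCfg_fromCfg {a b N : ℕ} (c : Cfg a) (hc : c ∈ CS a b N) (hnc : NC c) :
    toCfg (fromCfg (a := a) (b := b) c) = c := by
  have h : (∀ j, (c.2 j).card = b) ∧ (∀ i j : Fin a, i ≤ j → ∀ t : ℕ,
      ((c.2 j ∩ Finset.range t).card) ≤ ((c.2 i ∩ Finset.range t).card)) :=
    ⟨NC_card hc hnc, fun i j hij t => NC_counting hc hnc i j hij t⟩
  rw [fromCfg_eq _ h]
  refine Sigma.ext ((NC_perm_eq_one hc hnc).symm) (heq_of_eq ?_)
  funext j
  show (Finset.univ : Finset (Fin b)).image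
      (fun i : Fin b => mkT a b c.2 h.1 _ (i : ℕ) (j : ℕ)) = c.2 j
  ext u
  rw [Finset.mem_image]
  constructor
  · rintro ⟨m, _, rfl⟩
    rw [mkT_apply]
    exact Finset.orderEmbOfFin_mem _ _ _
  · intro hu
    obtain ⟨m, hm⟩ := emb_surj (h.1 j) hu
    exact ⟨m, Finset.mem_univ _, by rw [mkT_apply]; exact hm⟩

lemma tableau_finite (a b N : ℕ) :
    {T : SemistandardYoungTableau (rectDiagram a b) |
      ∀ i j, (i, j) ∈ rectDiagram a b → T i j < N}.Finite := by
  classical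
  set f : SemistandardYoungTableau (rectDiagram a b) → (Fin b × Fin a → ℕ) :=
    fun T p => T (p.1 : ℕ) (p.2 : ℕ) with hf
  have himg : (f '' {T : SemistandardYoungTableau (rectDiagram a b) |
      ∀ i j, (i, j) ∈ rectDiagram a b → T i j < N}).Finite := by
    refine Set.Finite.subset (Set.finite_range
      (fun g : (Fin b × Fin a → Fin N) => fun p : Fin b × Fin a => (g p : ℕ))) ?_
    rintro g ⟨T, hT, rfl⟩
    refine ⟨fun p => ⟨f T p, ?_⟩, rfl⟩
    exact hT _ _ (mem_rect.2 ⟨p.1.isLt, p.2.isLt⟩)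
  refine Set.Finite.of_finite_image himg ?_
  intro T1 h1 T2 h2 heq
  ext i j
  by_cases hcell : i < b ∧ j < a
  · have := congrFun heq (⟨i, hcell.1⟩, ⟨j, hcell.2⟩)
    exact this
  · have hnm : (i, j) ∉ rectDiagram a b := fun hmem => hcell (mem_rect.1 hmem)
    rw [SemistandardYoungTableau.zeros _ hnm, SemistandardYoungTableau.zeros _ hnm]

lemma tableau_weight {a b : ℕ} (x : ℕ → ℝ) (T : SemistandardYoungTableau (rectDiagram a b)) :
    ∏ p ∈ (rectDiagram a b).cells, x (T p.1 p.2) = cwt x (toCfg T) := by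
  unfold cwt
  have hsgn : (toCfg (a := a) (b := b) T).1 = 1 := rfl
  rw [hsgn, Equiv.Perm.sign_one]
  simp only [Units.val_one, Int.cast_one, one_mul]
  have hthis : ∀ j : Fin a, wt x ((toCfg T).2 j) = ∏ i ∈ Finset.range b, x (T i (j : ℕ)) := by
    intro j
    show (∏ u ∈ (Finset.univ : Finset (Fin b)).image fun i : Fin b => T (i : ℕ) (j : ℕ), x u) = _
    rw [Finset.prod_image (fun m _ m' _ hmm => (col_strictMono T j).injective hmm)]
    exact (Fin.prod_univ_eq_prod_range (fun i => x (T i (j : ℕ))) b)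
  have h2 : ∏ j : Fin a, wt x ((toCfg T).2 j)
      = ∏ j ∈ Finset.range a, ∏ i ∈ Finset.range b, x (T i j) := by
    rw [← Fin.prod_univ_eq_prod_range (fun j => ∏ i ∈ Finset.range b, x (T i j)) a]
    exact Finset.prod_congr rfl fun j _ => hthis j
  have hcells : (rectDiagram a b).cells = Finset.range b ×ˢ Finset.range a := rfl
  rw [hcells, Finset.prod_product, Finset.prod_comm, h2]


lemma fromCfg_bounded {a b N : ℕ} {c : Cfg a} (hc : c ∈ CS a b N) (hnc : NC c) :
    ∀ i j, (i, j) ∈ rectDiagram a b → fromCfg (a := a) (b := b) c i j < N := by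
  have h : (∀ j, (c.2 j).card = b) ∧ (∀ i j : Fin a, i ≤ j → ∀ t : ℕ,
      ((c.2 j ∩ Finset.range t).card) ≤ ((c.2 i ∩ Finset.range t).card)) :=
    ⟨NC_card hc hnc, fun i j hij t => NC_counting hc hnc i j hij t⟩
  intro i j hmem
  rw [mem_rect] at hmem
  rw [fromCfg_eq _ h]
  have := mkT_apply c.2 h.1
    (fun j1 j2 hle k => dom_of_counts (h.1 j1) (h.1 j2) (fun t => h.2 j1 j2 hle t) k)
    ⟨i, hmem.1⟩ ⟨j, hmem.2⟩
  rw [show ((⟨i, hmem.1⟩ : Fin b) : ℕ) = i from rfl] at this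
  rw [show ((⟨j, hmem.2⟩ : Fin a) : ℕ) = j from rfl] at this
  rw [this]
  have hmem2 := Finset.orderEmbOfFin_mem (c.2 ⟨j, hmem.2⟩) (h.1 ⟨j, hmem.2⟩) ⟨i, hmem.1⟩
  have := (mem_CS.1 hc ⟨j, hmem.2⟩).1 hmem2
  exact Finset.mem_range.1 this

lemma sum_NC_eq_schur (a b N : ℕ) (x : ℕ → ℝ) [DecidablePred (NC (a := a))] :
    ∑ c ∈ (CS a b N).filter (fun c => NC c), cwt x c = schur (rectDiagram a b) N x := by
  rw [schur]
  have hfin := tableau_finite a b N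
  rw [← Set.Finite.coe_toFinset hfin, finsum_mem_coe_finset]
  refine (Finset.sum_bij' (fun T (_ : T ∈ hfin.toFinset) => toCfg T)
    (fun c (_ : c ∈ (CS a b N).filter (fun c => NC c)) => fromCfg c) ?_ ?_ ?_ ?_ ?_).symm
  · intro T hT
    rw [Set.Finite.mem_toFinset] at hT
    obtain ⟨h1, h2⟩ := toCfg_mem T hT
    exact Finset.mem_filter.2 ⟨h1, h2⟩
  · intro c hc
    rw [Finset.mem_filter] at hc
    rw [Set.Finite.mem_toFinset]
    exact fromCfg_bounded hc.1 hc.2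
  · intro T hT
    rw [Set.Finite.mem_toFinset] at hT
    exact fromCfg_toCfg T hT
  · intro c hc
    rw [Finset.mem_filter] at hc
    exact toCfg_fromCfg c hc.1 hc.2
  · intro T _
    exact tableau_weight x T

/-- the rectangular dual Jacobi-Trudi identity -/
lemma rect_dualJT (a b N : ℕ) (x : ℕ → ℝ) :
    schur (rectDiagram a b) N x
      = Matrix.det (fun i j : Fin a => esymZ N x ((b : ℤ) + ((j : ℕ) : ℤ) - ((i : ℕ) : ℤ))) := by
  classical
  rw [det_expand, ← Finset.sum_filter_add_sum_filter_not (CS a b N) (fun c => NC c) (cwt x),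
    sum_cross_zero a b N x, add_zero, sum_NC_eq_schur]


/-! ### the binomial convolution for `esym` of `oneExtend` -/

lemma esym_oneExtend (b c m : ℕ) (q : ℕ → ℝ) :
    esym (b + c) (oneExtend b q) m
      = ∑ ℓ ∈ Finset.range (c + 1),
          (if ℓ ≤ m then ((b.choose (m - ℓ)) : ℝ) else 0) * esym c q ℓ := by
  classical
  have hRHS : ∑ ℓ ∈ Finset.range (c + 1),
      (if ℓ ≤ m then ((b.choose (m - ℓ)) : ℝ) else 0) * esym c q ℓ
      = ∑ p ∈ ((Finset.range (c + 1)).filter (· ≤ m)).sigma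
          (fun ℓ => (Finset.range b).powersetCard (m - ℓ) ×ˢ (Finset.range c).powersetCard ℓ),
          ∏ i ∈ p.2.2, q i := by
    rw [Finset.sum_sigma]
    simp_rw [ite_mul, zero_mul]
    rw [← Finset.sum_filter]
    refine Finset.sum_congr rfl fun ℓ hℓ => ?_
    rw [Finset.sum_product]
    have hinner : ∀ A ∈ (Finset.range b).powersetCard (m - ℓ),
        (∑ B ∈ (Finset.range c).powersetCard ℓ, ∏ i ∈ B, q i) = esym c q ℓ := fun _ _ => rfl
    rw [Finset.sum_congr rfl hinner, Finset.sum_const, Finset.card_powersetCard,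
      Finset.card_range, nsmul_eq_mul]
  rw [hRHS]
  unfold esym
  refine Finset.sum_bij'
    (fun S (_ : S ∈ (Finset.range (b + c)).powersetCard m) =>
      (⟨(S.filter (fun s => b ≤ s)).card,
        (S.filter (fun s => s < b), (S.filter (fun s => b ≤ s)).image (fun s => s - b))⟩ :
        (_ : ℕ) × (Finset ℕ × Finset ℕ)))
    (fun p _ => p.2.1 ∪ p.2.2.image (fun u => u + b)) ?_ ?_ ?_ ?_ ?_
  · -- forward membership
    intro S hS
    rw [Finset.mem_powersetCard] at hS
    have hSsub := hS.1
    have hinj : Set.InjOn (fun s => s - b) (S.filter (fun s => b ≤ s)) := by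
      intro u hu v hv huv
      rw [Finset.coe_filter] at hu hv
      simp only [Set.mem_setOf_eq] at hu hv
      dsimp at huv
      omega
    have hcardB : ((S.filter (fun s => b ≤ s)).image (fun s => s - b)).card
        = (S.filter (fun s => b ≤ s)).card := Finset.card_image_of_injOn hinj
    have hsplit : (S.filter (fun s => s < b)).card + (S.filter (fun s => b ≤ s)).card
        = m := by
      rw [← hS.2]
      have heqf : S.filter (fun s => b ≤ s) = S.filter (fun s => ¬ s < b) :=
        Finset.filter_congr (fun s _ => by simp [not_lt])
      rw [heqf]
      exact Finset.card_filter_add_card_filter_not _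
    have hBc : (S.filter (fun s => b ≤ s)).card ≤ c := by
      have hsub2 : (S.filter (fun s => b ≤ s)).image (fun s => s - b) ⊆ Finset.range c := by
        intro u hu
        obtain ⟨v, hv, rfl⟩ := Finset.mem_image.1 hu
        rw [Finset.mem_filter] at hv
        have := Finset.mem_range.1 (hSsub hv.1)
        rw [Finset.mem_range]
        omega
      have := Finset.card_le_card hsub2
      rw [hcardB] at this
      rwa [Finset.card_range] at this
    rw [Finset.mem_sigma, Finset.mem_filter, Finset.mem_range, Finset.mem_product,
      Finset.mem_powersetCard, Finset.mem_powersetCard]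
    dsimp only
    refine ⟨⟨by omega, by omega⟩, ⟨?_, by omega⟩, ?_, hcardB⟩
    · intro u hu
      rw [Finset.mem_filter] at hu
      rw [Finset.mem_range]
      exact hu.2
    · intro u hu
      obtain ⟨v, hv, rfl⟩ := Finset.mem_image.1 hu
      rw [Finset.mem_filter] at hv
      have := Finset.mem_range.1 (hSsub hv.1)
      rw [Finset.mem_range]
      omega
  · -- backward membership
    intro p hp
    rw [Finset.mem_sigma, Finset.mem_filter, Finset.mem_range, Finset.mem_product,
      Finset.mem_powersetCard, Finset.mem_powersetCard] at hp
    obtain ⟨⟨hpc, hpm⟩, ⟨hA, hAcard⟩, hB, hBcard⟩ := hp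
    rw [Finset.mem_powersetCard]
    have hdisj : Disjoint p.2.1 (p.2.2.image (fun u => u + b)) := by
      refine Finset.disjoint_left.2 fun u hu1 hu2 => ?_
      have h1 := Finset.mem_range.1 (hA hu1)
      obtain ⟨v, _, rfl⟩ := Finset.mem_image.1 hu2
      omega
    constructor
    · intro u hu
      rw [Finset.mem_union] at hu
      rw [Finset.mem_range]
      rcases hu with hu | hu
      · have := Finset.mem_range.1 (hA hu)
        omega
      · obtain ⟨v, hv, rfl⟩ := Finset.mem_image.1 hu
        have := Finset.mem_range.1 (hB hv)
        omega
    · rw [Finset.card_union_of_disjoint hdisj, hAcard,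
        Finset.card_image_of_injOn (fun u _ v _ huv => Nat.add_right_cancel huv)]
      omega
  · -- left inverse
    intro S hS
    rw [Finset.mem_powersetCard] at hS
    dsimp only
    ext u
    rw [Finset.mem_union, Finset.mem_filter, Finset.mem_image]
    constructor
    · rintro (⟨hu, _⟩ | ⟨v, hv, rfl⟩)
      · exact hu
      · obtain ⟨w, hw, rfl⟩ := Finset.mem_image.1 hv
        rw [Finset.mem_filter] at hw
        have : w - b + b = w := by
          have := hw.2
          omega
        rw [this]
        exact hw.1
    · intro hu
      by_cases hub : u < b
      · exact Or.inl ⟨hu, hub⟩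
      · refine Or.inr ⟨u - b, Finset.mem_image.2 ⟨u, Finset.mem_filter.2 ⟨hu, by omega⟩, rfl⟩, by omega⟩
  · -- right inverse
    intro p hp
    rw [Finset.mem_sigma, Finset.mem_filter, Finset.mem_range, Finset.mem_product,
      Finset.mem_powersetCard, Finset.mem_powersetCard] at hp
    obtain ⟨⟨hpc, hpm⟩, ⟨hA, hAcard⟩, hB, hBcard⟩ := hp
    have hAlt : ∀ u ∈ p.2.1, u < b := fun u hu => Finset.mem_range.1 (hA hu)
    have hfilt1 : (p.2.1 ∪ p.2.2.image (fun u => u + b)).filter (fun s => s < b) = p.2.1 := by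
      ext u
      rw [Finset.mem_filter, Finset.mem_union, Finset.mem_image]
      constructor
      · rintro ⟨hu | ⟨v, _, rfl⟩, hub⟩
        · exact hu
        · omega
      · intro hu
        exact ⟨Or.inl hu, hAlt u hu⟩
    have hfilt2 : (p.2.1 ∪ p.2.2.image (fun u => u + b)).filter (fun s => b ≤ s)
        = p.2.2.image (fun u => u + b) := by
      ext u
      rw [Finset.mem_filter, Finset.mem_union, Finset.mem_image]
      constructor
      · rintro ⟨hu | hu, hub⟩
        · exact absurd (hAlt u hu) (by omega)
        · exact hu
      · rintro ⟨v, hv, rfl⟩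
        exact ⟨Or.inr ⟨v, hv, rfl⟩, by omega⟩
    have hback : (p.2.2.image (fun u => u + b)).image (fun s => s - b) = p.2.2 := by
      rw [Finset.image_image]
      have : ((fun s => s - b) ∘ fun u => u + b) = id := by
        funext v; simp
      rw [this, Finset.image_id]
    have hcard2 : (p.2.2.image (fun u => u + b)).card = p.1 := by
      rw [Finset.card_image_of_injOn (fun u _ v _ huv => Nat.add_right_cancel huv), hBcard]
    refine Sigma.ext ?_ (heq_of_eq ?_)
    · dsimp only
      rw [hfilt2, hcard2]
    · dsimp only
      rw [hfilt1, hfilt2, hback]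
  · -- weights agree
    intro S hS
    rw [Finset.mem_powersetCard] at hS
    dsimp only
    have hsplit : (fun s => b ≤ s) = (fun s => ¬ s < b) := by funext s; simp [not_lt]
    rw [← Finset.prod_filter_mul_prod_filter_not S (fun s => s < b)]
    have h1 : ∏ i ∈ S.filter (fun s => s < b), oneExtend b q i = 1 := by
      refine Finset.prod_eq_one fun i hi => ?_
      rw [Finset.mem_filter] at hi
      unfold oneExtend
      rw [if_pos hi.2]
    have h2 : ∏ i ∈ S.filter (fun s => ¬ s < b), oneExtend b q i
        = ∏ i ∈ (S.filter (fun s => b ≤ s)).image (fun s => s - b), q i := by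
      rw [Finset.prod_image (fun u hu v hv huv => by
        rw [Finset.mem_coe, Finset.mem_filter] at hu hv
        omega)]
      have heqf : S.filter (fun s => ¬ s < b) = S.filter (fun s => b ≤ s) :=
        Finset.filter_congr (fun s _ => by simp [not_lt])
      rw [heqf]
      refine Finset.prod_congr rfl fun i hi => ?_
      rw [Finset.mem_filter] at hi
      unfold oneExtend
      rw [if_neg (by omega)]
    rw [h1, h2, one_mul]


lemma entry_eq (a b c : ℕ) (q : ℕ → ℝ) (i j : Fin a) :
    (∑ ℓ ∈ Finset.range (c + 1),
        (if 0 ≤ (ℓ : ℤ) + ((i : ℤ) - (j : ℤ)) then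
            (b.choose ((ℓ : ℤ) + ((i : ℤ) - (j : ℤ))).toNat : ℝ)
          else 0) * esym c q ℓ)
      = esymZ (b + c) (oneExtend b q) ((b : ℤ) + ((j : ℕ) : ℤ) - ((i : ℕ) : ℤ)) := by
  by_cases hm : 0 ≤ (b : ℤ) + ((j : ℕ) : ℤ) - ((i : ℕ) : ℤ)
  · set mN := ((b : ℤ) + ((j : ℕ) : ℤ) - ((i : ℕ) : ℤ)).toNat with hmN
    have hmZ : (mN : ℤ) = (b : ℤ) + ((j : ℕ) : ℤ) - ((i : ℕ) : ℤ) := Int.toNat_of_nonneg hm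
    unfold esymZ
    rw [if_pos hm, ← hmN, esym_oneExtend b c mN q]
    refine Finset.sum_congr rfl fun ℓ _ => ?_
    congr 1
    by_cases h1 : 0 ≤ (ℓ : ℤ) + ((i : ℤ) - (j : ℤ))
    · rw [if_pos h1]
      by_cases h2 : ℓ ≤ mN
      · rw [if_pos h2]
        have hle : mN - ℓ ≤ b := by omega
        have hX : ((ℓ : ℤ) + ((i : ℤ) - (j : ℤ))).toNat = b - (mN - ℓ) := by omega
        rw [hX, Nat.choose_symm hle]
      · rw [if_neg h2]
        have hgt : b < ((ℓ : ℤ) + ((i : ℤ) - (j : ℤ))).toNat := by omega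
        rw [Nat.choose_eq_zero_of_lt hgt, Nat.cast_zero]
    · rw [if_neg h1]
      by_cases h2 : ℓ ≤ mN
      · rw [if_pos h2]
        have hgt : b < mN - ℓ := by omega
        rw [Nat.choose_eq_zero_of_lt hgt, Nat.cast_zero]
      · rw [if_neg h2]
  · unfold esymZ
    rw [if_neg hm]
    refine Finset.sum_eq_zero fun ℓ _ => ?_
    split_ifs with h
    · have hgt : b < ((ℓ : ℤ) + ((i : ℤ) - (j : ℤ))).toNat := by omega
      rw [Nat.choose_eq_zero_of_lt hgt, Nat.cast_zero, zero_mul]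
    · rw [zero_mul]

end SchurToeplitzAux

/-- Toeplitz determinant formula:
`s_{(a^b)}(1^b, q_1,…,q_c) = det[ φ̂_{i−j} ]_{i,j=1}^{a}`, where
`φ̂_k = ∑_{ℓ ≥ 0} C(b, ℓ+k) e_ℓ(q_1,…,q_c)` (the sum is finite since `e_ℓ = 0` for
`ℓ > c`; the binomial coefficient vanishes for negative or too large arguments). -/
theorem schur_toeplitz (a b c : ℕ) (ha : 0 < a) (hb : 0 < b) (hc : 0 < c) (q : ℕ → ℝ) :
    schur (rectDiagram a b) (b + c) (oneExtend b q)
      = Matrix.det (fun i j : Fin a =>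
          ∑ ℓ ∈ Finset.range (c + 1),
            (if 0 ≤ (ℓ : ℤ) + ((i : ℤ) - (j : ℤ)) then
                (b.choose ((ℓ : ℤ) + ((i : ℤ) - (j : ℤ))).toNat : ℝ)
              else 0) * esym c q ℓ) := by
  have hM : (fun i j : Fin a =>
      ∑ ℓ ∈ Finset.range (c + 1),
        (if 0 ≤ (ℓ : ℤ) + ((i : ℤ) - (j : ℤ)) then
            (b.choose ((ℓ : ℤ) + ((i : ℤ) - (j : ℤ))).toNat : ℝ)
          else 0) * esym c q ℓ)
      = fun i j : Fin a =>
          esymZ (b + c) (oneExtend b q) ((b : ℤ) + ((j : ℕ) : ℤ) - ((i : ℕ) : ℤ)) := by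
    funext i j
    exact SchurToeplitzAux.entry_eq a b c q i j
  rw [hM]
  exact SchurToeplitzAux.rect_dualJT a b (b + c) (oneExtend b q)
end

section
/- Corner growth model and the g-measure: let q ∈ (0,1), let b, c be positive integers, and let (w_{ij})_{i∈[1,b], j∈[1,c]} be independent random variables each with geometric distribution P(w_{ij} = k) = (1−q)q^k for k ∈ ℕ (the product measure on ℕ^{[1,b]×[1,c]}). For 1 ≤ m ≤ b and 1 ≤ n ≤ c let G(m,n) be the maximum over monotone paths Π from (1,1) to (m,n) of ∑_{(i,j)∈Π} w_{ij}. Then for every partition λ = (λ_1 ≥ λ_2 ≥ ⋯ ≥ λ_b ≥ 0): P(G(b,c) = λ_1, G(b−1,c) = λ_2, …, G(1,c) = λ_b) = (1−q)^{bc} g_λ(q,…,q), with c arguments all equal to q. -/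
open scoped BigOperators

/-!
Write `G(m, n)` for the last passage time to the corner of the `m × n` box. Encode `w` by the
plane partition `π` with `π i j = #{n ∈ [1, c] | j < G(b - i, n)}`. Row `i` of `π` remembers
the function `n ↦ G(b - i, n)`, and the recursion
`G(m+1, n+1) = max (G(m, n+1)) (G(m+1, n)) + w m n` recovers `w` from these functions, so
`w ↦ π` is a bijection from the matrices with `G(b - k, c) = λ_{k+1}` onto the plane partitions
of shape `λ` with entries at most `c`. The columns of `π` containing `c - j` form the union over
`m` of the intervals `[G(m, j), G(m, j+1))`. The recursion splits this union into disjoint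
pieces of lengths `w 0 j, …, w (b-1) j`, so the geometric weight `(1 - q)^{bc} q^{∑ w}` becomes
`(1 - q)^{bc} ∏ q^{c_ℓ(π)}`.
-/

theorem matExt_of_lt {b c : ℕ} (w : Fin b × Fin c → ℕ) {i j : ℕ} (hi : i < b)
    (hj : j < c) :
    matExt w i j = w (⟨i, hi⟩, ⟨j, hj⟩) :=
  dif_pos ⟨hi, hj⟩

theorem YoungDiagram.notMem_of_colLen_le {μ : YoungDiagram} {i j : ℕ} (hi : μ.colLen 0 ≤ i) :
    (i, j) ∉ μ := fun hij => by
  have := YoungDiagram.mem_iff_lt_colLen.mp (μ.up_left_mem le_rfl (Nat.zero_le j) hij)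
  omega

theorem card_filter_Icc_sub_le {c e : ℕ} (he : e ≤ c) :
    ((Finset.Icc 1 c).filter fun n => c + 1 - n ≤ e).card = e := by
  rw [show (Finset.Icc 1 c).filter (fun n => c + 1 - n ≤ e) = Finset.Icc (c + 1 - e) c by
    ext n; simp only [Finset.mem_filter, Finset.mem_Icc]; omega, Nat.card_Icc]
  omega

theorem le_card_filter_Icc_iff {p : ℕ → Prop} [DecidablePred p] (hp : Monotone p) {c t : ℕ}
    (ht : 0 < t) (htc : t ≤ c) :
    t ≤ ((Finset.Icc 1 c).filter p).card ↔ p (c + 1 - t) := by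
  constructor
  · intro h
    by_contra hpt
    have hsub : (Finset.Icc 1 c).filter p ⊆ Finset.Icc (c + 2 - t) c := by
      intro n hn
      simp only [Finset.mem_filter, Finset.mem_Icc] at hn ⊢
      refine ⟨?_, hn.1.2⟩
      by_contra hlt
      exact hpt (hp (by omega) hn.2)
    have := Finset.card_le_card hsub
    rw [Nat.card_Icc] at this
    omega
  · intro hpt
    have hsub : Finset.Icc (c + 1 - t) c ⊆ (Finset.Icc 1 c).filter p := by
      intro n hn
      simp only [Finset.mem_filter, Finset.mem_Icc] at hn ⊢
      exact ⟨⟨by omega, hn.2⟩, hp hn.1 hpt⟩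
    have := Finset.card_le_card hsub
    rw [Nat.card_Icc] at this
    omega

/-- Since `g` is monotone with `g 0 = 0`, the union is also the disjoint union of the intervals
`[max (g m) (f (m + 1)), g (m + 1))`. -/
theorem card_biUnion_Ico_of_monotone {f g : ℕ → ℕ} (hf : Monotone f) (hg : Monotone g)
    (hg0 : g 0 = 0) (b : ℕ) :
    ((Finset.range b).biUnion fun m => Finset.Ico (f (m + 1)) (g (m + 1))).card =
      ∑ m ∈ Finset.range b, (g (m + 1) - max (g m) (f (m + 1))) := by
  classical
  have hunion : ((Finset.range b).biUnion fun m => Finset.Ico (f (m + 1)) (g (m + 1))) =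
      (Finset.range b).biUnion fun m => Finset.Ico (max (g m) (f (m + 1))) (g (m + 1)) := by
    ext x
    simp only [Finset.mem_biUnion, Finset.mem_range, Finset.mem_Ico, max_le_iff]
    constructor
    · rintro ⟨m, hm, hfx, hxg⟩
      have hex : ∃ k, x < g (k + 1) := ⟨m, hxg⟩
      have hle : Nat.find hex ≤ m := Nat.find_min' hex hxg
      have hgx : g (Nat.find hex) ≤ x := by
        rcases hk : Nat.find hex with _ | k
        · simp [hg0]
        · exact not_lt.mp (Nat.find_min hex (by omega))
      exact ⟨Nat.find hex, by omega, ⟨hgx, (hf (by omega)).trans hfx⟩, Nat.find_spec hex⟩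
    · rintro ⟨m, hm, ⟨-, hfx⟩, hxg⟩
      exact ⟨m, hm, hfx, hxg⟩
  rw [hunion, Finset.card_biUnion]
  · simp only [Nat.card_Ico]
  · intro m _ m' _ hmm'
    rw [Function.onFun, Finset.disjoint_left]
    simp only [Finset.mem_Ico, max_le_iff]
    intro x hx hx'
    rcases lt_or_gt_of_ne hmm' with h | h
    · exact absurd (hx.2.trans_le (hg (show m + 1 ≤ m' by omega))) (not_lt.mpr hx'.1.1)
    · exact absurd (hx'.2.trans_le (hg (show m' + 1 ≤ m by omega))) (not_lt.mpr hx.1.1)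

def MonStep (p q : ℕ × ℕ) : Prop := q = (p.1 + 1, p.2) ∨ q = (p.1, p.2 + 1)

theorem MonStep.sum_eq {p q : ℕ × ℕ} (h : MonStep p q) : q.1 + q.2 = p.1 + p.2 + 1 := by
  rcases h with rfl | rfl <;> simp only <;> omega

theorem MonStep.le {p q : ℕ × ℕ} (h : MonStep p q) : p ≤ q := by
  rcases h with rfl | rfl <;> simp [Prod.le_def]

theorem isMonPath_iff {L : List (ℕ × ℕ)} {s t : ℕ × ℕ} :
    IsMonPath L s t ↔ L.head? = some s ∧ L.getLast? = some t ∧ L.IsChain MonStep :=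
  Iff.rfl

namespace IsMonPath

variable {L : List (ℕ × ℕ)} {s t a : ℕ × ℕ}

theorem ne_nil (h : IsMonPath L s t) : L ≠ [] := by
  rintro rfl
  simp [IsMonPath] at h

theorem singleton_iff : IsMonPath [a] s t ↔ a = s ∧ a = t := by
  simp [isMonPath_iff, eq_comm]

theorem append_singleton_iff (hL : L ≠ []) :
    IsMonPath (L ++ [a]) s t ↔ a = t ∧ ∃ t', IsMonPath L s t' ∧ MonStep t' a := by
  obtain ⟨u, hu⟩ : ∃ u, L.getLast? = some u := Option.isSome_iff_exists.mp (by simpa)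
  simp only [isMonPath_iff, List.head?_append_of_ne_nil _ hL, List.getLast?_concat,
    Option.some.injEq, List.isChain_append, List.isChain_singleton, List.head?_cons, hu,
    Option.mem_some_iff, forall_eq', true_and]
  constructor
  · rintro ⟨hs, rfl, hc, hstep⟩
    exact ⟨rfl, u, ⟨hs, rfl, hc⟩, hstep⟩
  · rintro ⟨rfl, t', ⟨hs, rfl, hc⟩, hstep⟩
    exact ⟨hs, rfl, hc, hstep⟩

theorem append_singleton (h : IsMonPath L s t) (hstep : MonStep t a) :
    IsMonPath (L ++ [a]) s a :=
  (append_singleton_iff h.ne_nil).mpr ⟨rfl, t, h, hstep⟩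

theorem exists_dropLast (h : IsMonPath L s t) (hst : s ≠ t) :
    ∃ t', IsMonPath L.dropLast s t' ∧ MonStep t' t ∧ L = L.dropLast ++ [t] := by
  have hL : L = L.dropLast ++ [t] := (List.dropLast_append_getLast? t h.2.1).symm
  have hne : L.dropLast ≠ [] := by
    intro he
    rw [he, List.nil_append] at hL
    exact hst (singleton_iff.mp (hL ▸ h)).1.symm
  rw [hL] at h
  obtain ⟨-, t', ht', hstep⟩ := (append_singleton_iff hne).mp h
  exact ⟨t', ht', hstep, hL⟩

theorem length_add_eq_and_le (h : IsMonPath L s t) :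
    L.length + s.1 + s.2 = t.1 + t.2 + 1 ∧ ∀ p ∈ L, p ≤ t := by
  induction L using List.reverseRecOn generalizing t with
  | nil => exact absurd rfl h.ne_nil
  | append_singleton L a ih =>
    rcases eq_or_ne L [] with rfl | hL
    · obtain ⟨rfl, rfl⟩ := singleton_iff.mp h
      simp only [List.nil_append, List.length_singleton, List.mem_singleton, forall_eq, le_rfl,
        and_true]
      omega
    · obtain ⟨rfl, t', ht', hstep⟩ := (append_singleton_iff hL).mp h
      obtain ⟨hlen, hle⟩ := ih ht'
      have := hstep.sum_eq
      refine ⟨by simp only [List.length_append, List.length_singleton]; omega, ?_⟩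
      simp only [List.mem_append, List.mem_singleton]
      rintro p (hp | rfl)
      exacts [(hle p hp).trans hstep.le, le_rfl]

theorem eq_singleton (h : IsMonPath L s s) : L = [s] := by
  have hlen : L.length = 1 := by have := h.length_add_eq_and_le.1; omega
  obtain ⟨a, rfl⟩ := List.length_eq_one_iff.mp hlen
  rw [(singleton_iff.mp h).1]

end IsMonPath

def pathWeights (d : ℕ → ℕ → ℕ) (t : ℕ × ℕ) : Set ℕ :=
  {n | ∃ L, IsMonPath L (0, 0) t ∧ n = (L.map fun p => d p.1 p.2).sum}

section LastPassage

variable (d : ℕ → ℕ → ℕ)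

theorem exists_isMonPath (t : ℕ × ℕ) : ∃ L, IsMonPath L (0, 0) t := by
  obtain ⟨x, y⟩ := t
  induction x with
  | zero =>
    induction y with
    | zero => exact ⟨[(0, 0)], IsMonPath.singleton_iff.mpr ⟨rfl, rfl⟩⟩
    | succ y ih =>
      obtain ⟨L, hL⟩ := ih
      exact ⟨_, hL.append_singleton (Or.inr rfl)⟩
  | succ x ih =>
    obtain ⟨L, hL⟩ := ih
    exact ⟨_, hL.append_singleton (Or.inl rfl)⟩

theorem pathWeights_nonempty (t : ℕ × ℕ) : (pathWeights d t).Nonempty :=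
  let ⟨L, hL⟩ := exists_isMonPath t
  ⟨_, L, hL, rfl⟩

theorem pathWeights_bddAbove (t : ℕ × ℕ) : BddAbove (pathWeights d t) := by
  classical
  let box := Finset.range (t.1 + 1) ×ˢ Finset.range (t.2 + 1)
  refine ⟨(t.1 + t.2 + 1) * box.sup fun p => d p.1 p.2, ?_⟩
  rintro n ⟨L, hL, rfl⟩
  obtain ⟨hlen, hle⟩ := hL.length_add_eq_and_le
  have hbound := List.sum_le_card_nsmul (L.map fun p => d p.1 p.2) (box.sup fun p => d p.1 p.2)
    (by
      simp only [List.mem_map]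
      rintro _ ⟨p, hp, rfl⟩
      obtain ⟨h1, h2⟩ := Prod.le_def.mp (hle p hp)
      exact Finset.le_sup (f := fun p : ℕ × ℕ => d p.1 p.2)
        (by simp [box, h1, h2]))
  simp only [List.length_map, smul_eq_mul] at hbound
  simpa [show L.length = t.1 + t.2 + 1 by simpa using hlen] using hbound

theorem lastPassage_mem_pathWeights (t : ℕ × ℕ) : lastPassage d (0, 0) t ∈ pathWeights d t :=
  Nat.sSup_mem (pathWeights_nonempty d t) (pathWeights_bddAbove d t)

theorem le_lastPassage_of_mem {t : ℕ × ℕ} {n : ℕ} (h : n ∈ pathWeights d t) :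
    n ≤ lastPassage d (0, 0) t :=
  le_csSup (pathWeights_bddAbove d t) h

theorem le_lastPassage (t : ℕ × ℕ) : d t.1 t.2 ≤ lastPassage d (0, 0) t := by
  obtain ⟨L, hL, hsum⟩ := lastPassage_mem_pathWeights d t
  rw [hsum]
  exact List.le_sum_of_mem (List.mem_map_of_mem (List.mem_of_getLast? hL.2.1))

theorem lastPassage_origin : lastPassage d (0, 0) (0, 0) = d 0 0 := by
  obtain ⟨L, hL, hsum⟩ := lastPassage_mem_pathWeights d (0, 0)
  simpa [hL.eq_singleton] using hsum

theorem lastPassage_add_le_of_monStep {t' t : ℕ × ℕ} (h : MonStep t' t) :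
    lastPassage d (0, 0) t' + d t.1 t.2 ≤ lastPassage d (0, 0) t := by
  obtain ⟨L, hL, hsum⟩ := lastPassage_mem_pathWeights d t'
  exact le_lastPassage_of_mem d ⟨L ++ [t], hL.append_singleton h, by simp [hsum]⟩

theorem exists_monStep_lastPassage_le {t : ℕ × ℕ} (ht : t ≠ (0, 0)) :
    ∃ t', MonStep t' t ∧ lastPassage d (0, 0) t ≤ lastPassage d (0, 0) t' + d t.1 t.2 := by
  obtain ⟨L, hL, hsum⟩ := lastPassage_mem_pathWeights d t
  obtain ⟨t', hL', hstep, hLeq⟩ := hL.exists_dropLast ht.symm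
  refine ⟨t', hstep, ?_⟩
  rw [hsum, hLeq, List.map_append, List.sum_append]
  simpa using le_lastPassage_of_mem d ⟨_, hL', rfl⟩

end LastPassage

/-- `G(m, n)`: the last passage time to the corner of the `m × n` box, with `G = 0` on the
boundary `m = 0` or `n = 0`. -/
noncomputable def cornerTime (d : ℕ → ℕ → ℕ) (m n : ℕ) : ℕ :=
  if m = 0 ∨ n = 0 then 0 else lastPassage d (0, 0) (m - 1, n - 1)

section CornerTime

variable (d : ℕ → ℕ → ℕ)

@[simp] theorem cornerTime_zero_left (n : ℕ) : cornerTime d 0 n = 0 := by simp [cornerTime]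

@[simp] theorem cornerTime_zero_right (m : ℕ) : cornerTime d m 0 = 0 := by simp [cornerTime]

theorem cornerTime_succ_succ (m n : ℕ) :
    cornerTime d (m + 1) (n + 1) = lastPassage d (0, 0) (m, n) := by
  simp [cornerTime]

theorem cornerTime_add_le_succ_succ (m n : ℕ) :
    cornerTime d m (n + 1) + d m n ≤ cornerTime d (m + 1) (n + 1) ∧
      cornerTime d (m + 1) n + d m n ≤ cornerTime d (m + 1) (n + 1) := by
  rw [cornerTime_succ_succ]
  constructor
  · cases m with
    | zero => simpa using le_lastPassage d (0, n)
    | succ m => rw [cornerTime_succ_succ]; exact lastPassage_add_le_of_monStep d (Or.inl rfl)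
  · cases n with
    | zero => simpa using le_lastPassage d (m, 0)
    | succ n => rw [cornerTime_succ_succ]; exact lastPassage_add_le_of_monStep d (Or.inr rfl)

theorem cornerTime_succ_succ_le (m n : ℕ) :
    cornerTime d (m + 1) (n + 1) ≤
      max (cornerTime d m (n + 1)) (cornerTime d (m + 1) n) + d m n := by
  rw [cornerTime_succ_succ]
  by_cases h0 : (m, n) = (0, 0)
  · simp only [Prod.mk.injEq] at h0
    obtain ⟨rfl, rfl⟩ := h0
    simp [lastPassage_origin]
  obtain ⟨⟨x, y⟩, hstep | hstep, hle⟩ := exists_monStep_lastPassage_le d h0 <;>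
    simp only [Prod.mk.injEq] at hstep <;> obtain ⟨rfl, rfl⟩ := hstep
  · rw [cornerTime_succ_succ]
    exact hle.trans (Nat.add_le_add_right (le_max_left _ _) _)
  · rw [cornerTime_succ_succ]
    exact hle.trans (Nat.add_le_add_right (le_max_right _ _) _)

theorem cornerTime_succ_succ_eq (m n : ℕ) :
    cornerTime d (m + 1) (n + 1) =
      max (cornerTime d m (n + 1)) (cornerTime d (m + 1) n) + d m n := by
  have := cornerTime_add_le_succ_succ d m n
  exact le_antisymm (cornerTime_succ_succ_le d m n) (by rw [← max_add_add_right]; omega)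

theorem cornerTime_mono_left (n : ℕ) : Monotone (cornerTime d · n) := by
  refine monotone_nat_of_le_succ fun m => ?_
  cases n with
  | zero => simp
  | succ n => exact (Nat.le_add_right _ _).trans (cornerTime_add_le_succ_succ d m n).1

theorem cornerTime_mono_right (m : ℕ) : Monotone (cornerTime d m) := by
  refine monotone_nat_of_le_succ fun n => ?_
  cases m with
  | zero => simp
  | succ m => exact (Nat.le_add_right _ _).trans (cornerTime_add_le_succ_succ d m n).2

theorem cornerTime_eq_of_rec {G : ℕ → ℕ → ℕ} {b c : ℕ}
    (h0 : ∀ n ≤ c, G 0 n = 0) (h0' : ∀ m ≤ b, G m 0 = 0)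
    (hrec : ∀ m < b, ∀ n < c, G (m + 1) (n + 1) = max (G m (n + 1)) (G (m + 1) n) + d m n) :
    ∀ m ≤ b, ∀ n ≤ c, cornerTime d m n = G m n := by
  intro m
  induction m with
  | zero => intro _ n hn; rw [h0 n hn, cornerTime_zero_left]
  | succ m ihm =>
    intro hm n
    induction n with
    | zero => intro _; rw [h0' (m + 1) hm, cornerTime_zero_right]
    | succ n ihn =>
      intro hn
      rw [cornerTime_succ_succ_eq, hrec m hm n hn, ihm (by omega) (n + 1) hn, ihn (by omega)]

theorem cornerTime_sub_eq_lastPassage {b c k : ℕ} (hk : k < b) (hc : 0 < c) :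
    cornerTime d (b - k) c = lastPassage d (0, 0) (b - 1 - k, c - 1) := by
  rw [cornerTime, if_neg (by omega), show b - k - 1 = b - 1 - k by omega]

end CornerTime

namespace PlanePartition

@[ext] theorem ext {π π' : PlanePartition}
    (h : ∀ i j, π.entry i j = π'.entry i j) : π = π' := by
  cases π; cases π'; simpa [funext_iff] using h

theorem hasShape.entry_eq_zero {π : PlanePartition} {μ : YoungDiagram} (h : π.hasShape μ)
    {i j : ℕ} (hij : (i, j) ∉ μ) : π.entry i j = 0 := by
  by_contra hne
  exact hij ((h i j).mp (by omega))

theorem hasShape.rowsLE {π : PlanePartition} {μ : YoungDiagram} (h : π.hasShape μ) {b : ℕ}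
    (hμ : μ.colLen 0 ≤ b) : π.rowsLE b := fun _ _ hi =>
  h.entry_eq_zero (YoungDiagram.notMem_of_colLen_le (hμ.trans hi))

section OfMatrix

noncomputable def ofMatrix (b c : ℕ) (d : ℕ → ℕ → ℕ) : PlanePartition where
  entry i j := ((Finset.Icc 1 c).filter fun n => j < cornerTime d (b - i) n).card
  row_decr i j := Finset.card_le_card fun n hn => by
    simp only [Finset.mem_filter] at hn ⊢
    exact ⟨hn.1, by omega⟩
  col_decr i j := Finset.card_le_card fun n hn => by
    simp only [Finset.mem_filter] at hn ⊢
    exact ⟨hn.1, hn.2.trans_le (cornerTime_mono_left d n (by omega))⟩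
  finite_support := by
    refine (Finset.range b ×ˢ Finset.range (cornerTime d b c)).finite_toSet.subset ?_
    rintro ⟨i, j⟩ hij
    obtain ⟨n, hn⟩ := Finset.card_ne_zero.mp hij
    simp only [Finset.mem_filter, Finset.mem_Icc] at hn
    have hib : i < b := by
      by_contra hbi
      simp [show b - i = 0 by omega] at hn
    have h1 : cornerTime d (b - i) n ≤ cornerTime d b n :=
      cornerTime_mono_left d n (Nat.sub_le b i)
    have h2 : cornerTime d b n ≤ cornerTime d b c := cornerTime_mono_right d b hn.1.2
    simp only [Finset.coe_product, Set.mem_prod, Finset.mem_coe, Finset.mem_range]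
    omega

variable (b c : ℕ) (d : ℕ → ℕ → ℕ)

theorem ofMatrix_entry (i j : ℕ) :
    (ofMatrix b c d).entry i j =
      ((Finset.Icc 1 c).filter fun n => j < cornerTime d (b - i) n).card :=
  rfl

theorem ofMatrix_entriesLE : (ofMatrix b c d).entriesLE c := fun i j => by
  have := Finset.card_filter_le (Finset.Icc 1 c) fun n => j < cornerTime d (b - i) n
  rw [Nat.card_Icc] at this
  rw [ofMatrix_entry]
  omega

theorem ofMatrix_entry_of_le {i : ℕ} (j : ℕ) (hi : b ≤ i) :
    (ofMatrix b c d).entry i j = 0 := by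
  simp [ofMatrix_entry, show b - i = 0 by omega]

theorem le_ofMatrix_entry_iff (i j : ℕ) {t : ℕ} (ht : 0 < t) (htc : t ≤ c) :
    t ≤ (ofMatrix b c d).entry i j ↔ j < cornerTime d (b - i) (c + 1 - t) :=
  le_card_filter_Icc_iff (fun _ _ hnn' hj => hj.trans_le (cornerTime_mono_right d _ hnn')) ht htc

theorem ofMatrix_entry_eq_iff (i j : ℕ) {ℓ : ℕ} (hℓ : 0 < ℓ) (hℓc : ℓ ≤ c) :
    (ofMatrix b c d).entry i j = ℓ ↔
      cornerTime d (b - i) (c - ℓ) ≤ j ∧ j < cornerTime d (b - i) (c + 1 - ℓ) := by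
  rw [← le_ofMatrix_entry_iff b c d i j hℓ hℓc]
  have hle := ofMatrix_entriesLE b c d i j
  rcases hℓc.eq_or_lt with rfl | hlt
  · simp only [Nat.sub_self, cornerTime_zero_right, zero_le, true_and]
    omega
  · have := le_ofMatrix_entry_iff b c d i j (t := ℓ + 1) (by omega) hlt
    rw [show c + 1 - (ℓ + 1) = c - ℓ by omega] at this
    rw [← not_lt, ← this]
    omega

end OfMatrix

section ToMatrix

variable (π : PlanePartition)

noncomputable def levelLen (i t : ℕ) : ℕ := {j | t ≤ π.entry i j}.ncard

theorem lt_levelLen_iff (i : ℕ) {t : ℕ} (ht : 0 < t) (j : ℕ) :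
    j < π.levelLen i t ↔ t ≤ π.entry i j := by
  have hlow : IsLowerSet {j | t ≤ π.entry i j} := fun j' j hle hj =>
    le_trans hj (antitone_nat_of_succ_le (π.row_decr i) hle)
  have hfin : {j | t ≤ π.entry i j}.Finite :=
    (π.finite_support.preimage (Prod.mk_right_injective i).injOn).subset fun j (hj : t ≤ _) =>
      show π.entry i j ≠ 0 by omega
  obtain huniv | ⟨a, ha⟩ := hlow.eq_univ_or_Iio
  · exact absurd (huniv ▸ hfin) Set.infinite_univ
  · simp only [levelLen, ha, Set.ncard_Iio_nat]
    exact (Set.ext_iff.mp ha j).symm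

theorem levelLen_eq_zero {i t : ℕ} (h : ∀ j, π.entry i j < t) : π.levelLen i t = 0 := by
  have hempty : {j | t ≤ π.entry i j} = ∅ :=
    Set.eq_empty_of_forall_notMem fun j (hj : t ≤ _) => (h j).not_ge hj
  rw [levelLen, hempty, Set.ncard_empty]

/-- The last passage times `G(m, n)` of `π.toMatrix b c` (see `cornerTime_toMatrix`). -/
noncomputable def levelTime (b c m n : ℕ) : ℕ := π.levelLen (b - m) (c + 1 - n)

noncomputable def toMatrix (b c : ℕ) : Fin b × Fin c → ℕ := fun p =>
  π.levelTime b c (p.1 + 1) (p.2 + 1) -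
    max (π.levelTime b c p.1 (p.2 + 1)) (π.levelTime b c (p.1 + 1) p.2)

variable {π} {b c : ℕ}

theorem levelTime_zero_left (hrows : π.rowsLE b) {n : ℕ} (hn : n ≤ c) :
    π.levelTime b c 0 n = 0 :=
  π.levelLen_eq_zero fun j => by rw [hrows _ j (by omega)]; omega

theorem levelTime_zero_right (hent : π.entriesLE c) (m : ℕ) : π.levelTime b c m 0 = 0 :=
  π.levelLen_eq_zero fun j => by have := hent (b - m) j; omega

theorem levelTime_mono_right {m n : ℕ} (hn : n < c) :
    π.levelTime b c m n ≤ π.levelTime b c m (n + 1) := by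
  by_contra! h
  have h1 := (π.lt_levelLen_iff _ (by omega) _).mp h
  exact lt_irrefl _ ((π.lt_levelLen_iff (b - m) (t := c + 1 - (n + 1)) (by omega) _).mpr
    (le_trans (by omega) h1))

theorem levelTime_mono_left {m n : ℕ} (hm : m < b) (hn : n ≤ c) :
    π.levelTime b c m n ≤ π.levelTime b c (m + 1) n := by
  by_contra! h
  have h1 := (π.lt_levelLen_iff _ (by omega) _).mp h
  have h2 := π.col_decr (b - (m + 1)) (π.levelTime b c (m + 1) n)
  rw [show b - (m + 1) + 1 = b - m by omega] at h2
  have := (π.lt_levelLen_iff (b - (m + 1)) (t := c + 1 - n) (by omega) _).mpr (h1.trans h2)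
  exact lt_irrefl _ this

end ToMatrix

section RoundTrip

variable {π : PlanePartition} {b c : ℕ}

theorem cornerTime_toMatrix (hrows : π.rowsLE b) (hent : π.entriesLE c) :
    ∀ m ≤ b, ∀ n ≤ c, cornerTime (matExt (π.toMatrix b c)) m n = π.levelTime b c m n := by
  refine cornerTime_eq_of_rec _ (fun n hn => levelTime_zero_left hrows hn)
    (fun m _ => levelTime_zero_right hent m) fun m hm n hn => ?_
  have := max_le (levelTime_mono_left (π := π) hm (n := n + 1) (by omega))
    (levelTime_mono_right (π := π) (m := m + 1) hn)
  rw [matExt_of_lt _ hm hn]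
  dsimp only [toMatrix]
  omega

theorem ofMatrix_toMatrix (hrows : π.rowsLE b) (hent : π.entriesLE c) :
    ofMatrix b c (matExt (π.toMatrix b c)) = π := by
  ext i j
  rcases lt_or_ge i b with hib | hib
  · rw [ofMatrix_entry, ← card_filter_Icc_sub_le (hent i j)]
    refine congrArg Finset.card (Finset.filter_congr fun n hn => ?_)
    rw [Finset.mem_Icc] at hn
    rw [cornerTime_toMatrix hrows hent _ (Nat.sub_le b i) _ hn.2, levelTime,
      show b - (b - i) = i by omega, lt_levelLen_iff _ _ (by omega)]
  · rw [ofMatrix_entry_of_le _ _ _ j hib, hrows i j hib]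

theorem levelTime_ofMatrix (d : ℕ → ℕ → ℕ) {m n : ℕ} (hm : m ≤ b) (hn : n ≤ c) :
    (ofMatrix b c d).levelTime b c m n = cornerTime d m n := by
  rcases n.eq_zero_or_pos with rfl | hn0
  · rw [levelTime_zero_right (ofMatrix_entriesLE b c d), cornerTime_zero_right]
  refine eq_of_forall_lt_iff fun j => ?_
  rw [levelTime, lt_levelLen_iff _ _ (by omega),
    le_ofMatrix_entry_iff b c d _ _ (by omega) (by omega),
    show b - (b - m) = m by omega, show c + 1 - (c + 1 - n) = n by omega]

theorem toMatrix_ofMatrix (w : Fin b × Fin c → ℕ) :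
    (ofMatrix b c (matExt w)).toMatrix b c = w := by
  funext ⟨i, j⟩
  have hi : (i : ℕ) + 1 ≤ b := i.isLt
  have hj : (j : ℕ) + 1 ≤ c := j.isLt
  dsimp only [toMatrix]
  rw [levelTime_ofMatrix _ hi hj, levelTime_ofMatrix _ i.isLt.le hj,
    levelTime_ofMatrix _ hi j.isLt.le, cornerTime_succ_succ_eq, matExt_of_lt w i.isLt j.isLt,
    Nat.add_sub_cancel_left]

end RoundTrip

theorem cCol_ofMatrix {b c : ℕ} (d : ℕ → ℕ → ℕ) {j : ℕ} (hj : j < c) :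
    (ofMatrix b c d).cCol (c - j) = ∑ i ∈ Finset.range b, d i j := by
  have hcols : {col | ∃ i, (ofMatrix b c d).entry i col = c - j} =
      ↑((Finset.range b).biUnion fun m =>
        Finset.Ico (cornerTime d (m + 1) j) (cornerTime d (m + 1) (j + 1))) := by
    ext col
    simp only [Set.mem_ofPred_eq, Finset.coe_biUnion, Finset.coe_range, Set.mem_iUnion,
      Set.mem_Iio, Finset.coe_Ico, Set.mem_Ico, exists_prop]
    constructor
    · rintro ⟨i, hi⟩
      rcases lt_or_ge i b with hib | hib
      · rw [ofMatrix_entry_eq_iff b c d i col (by omega) (by omega),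
          show c - (c - j) = j by omega, show c + 1 - (c - j) = j + 1 by omega] at hi
        exact ⟨b - 1 - i, by omega, by rwa [show b - 1 - i + 1 = b - i by omega]⟩
      · rw [ofMatrix_entry_of_le b c d col hib] at hi
        omega
    · rintro ⟨m, hm, hcol⟩
      refine ⟨b - 1 - m, ?_⟩
      rw [ofMatrix_entry_eq_iff b c d _ col (by omega) (by omega),
        show c - (c - j) = j by omega, show c + 1 - (c - j) = j + 1 by omega,
        show b - (b - 1 - m) = m + 1 by omega]
      exact hcol
  rw [cCol, hcols, Set.ncard_coe_finset,
    card_biUnion_Ico_of_monotone (cornerTime_mono_left d j) (cornerTime_mono_left d (j + 1))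
      (cornerTime_zero_left d _)]
  refine Finset.sum_congr rfl fun m _ => ?_
  rw [cornerTime_succ_succ_eq, max_comm (cornerTime d m (j + 1)), Nat.add_sub_cancel_left]

theorem sum_cCol_ofMatrix {b c : ℕ} (w : Fin b × Fin c → ℕ) :
    ∑ ℓ ∈ Finset.range c, (ofMatrix b c (matExt w)).cCol (ℓ + 1) = ∑ p, w p := by
  have hcol : ∀ j ∈ Finset.range c, (ofMatrix b c (matExt w)).cCol (c - 1 - j + 1) =
      ∑ i ∈ Finset.range b, matExt w i j := by
    intro j hj
    rw [Finset.mem_range] at hj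
    rw [show c - 1 - j + 1 = c - j by omega, cCol_ofMatrix _ hj]
  rw [← Finset.sum_range_reflect, Finset.sum_congr rfl hcol, Finset.sum_comm,
    Fintype.sum_prod_type, ← Fin.sum_univ_eq_sum_range]
  refine Finset.sum_congr rfl fun i _ => ?_
  rw [← Fin.sum_univ_eq_sum_range]
  exact Finset.sum_congr rfl fun j _ => matExt_of_lt w i.isLt j.isLt

end PlanePartition

def cornerEvent (b c : ℕ) (μ : YoungDiagram) (w : Fin b × Fin c → ℕ) : Prop :=
  ∀ k : Fin b, lastPassage (matExt w) (0, 0) (b - 1 - (k : ℕ), c - 1) = μ.rowLen k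

section CornerEquiv

open PlanePartition

variable {b c : ℕ} {μ : YoungDiagram}

theorem ofMatrix_hasShape (hc : 0 < c) (hμ : μ.colLen 0 ≤ b) {w : Fin b × Fin c → ℕ}
    (hw : cornerEvent b c μ w) :
    (ofMatrix b c (matExt w)).hasShape μ := by
  intro i j
  rcases lt_or_ge i b with hib | hib
  · change 1 ≤ _ ↔ _
    rw [le_ofMatrix_entry_iff b c _ i j one_pos hc, Nat.add_sub_cancel,
      cornerTime_sub_eq_lastPassage _ hib hc, hw ⟨i, hib⟩, YoungDiagram.mem_iff_lt_rowLen]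
  · rw [ofMatrix_entry_of_le _ _ _ j hib]
    simpa using YoungDiagram.notMem_of_colLen_le (hμ.trans hib)

theorem cornerEvent_toMatrix (hc : 0 < c) (hμ : μ.colLen 0 ≤ b) {π : PlanePartition}
    (hsh : π.hasShape μ) (hent : π.entriesLE c) :
    cornerEvent b c μ (π.toMatrix b c) := by
  intro k
  rw [← cornerTime_sub_eq_lastPassage _ k.isLt hc,
    cornerTime_toMatrix (hsh.rowsLE hμ) hent _ (Nat.sub_le _ _) _ le_rfl, levelTime,
    show b - (b - k) = k by omega, Nat.add_sub_cancel_left]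
  refine eq_of_forall_lt_iff fun j => ?_
  rw [lt_levelLen_iff _ _ one_pos, ← YoungDiagram.mem_iff_lt_rowLen, ← hsh]
  rfl

noncomputable def cornerEquiv (hc : 0 < c) (hμ : μ.colLen 0 ≤ b) :
    {w // cornerEvent b c μ w} ≃ {π : PlanePartition // π.hasShape μ ∧ π.entriesLE c} where
  toFun w := ⟨ofMatrix b c (matExt w.1), ofMatrix_hasShape hc hμ w.2, ofMatrix_entriesLE b c _⟩
  invFun π := ⟨π.1.toMatrix b c, cornerEvent_toMatrix hc hμ π.2.1 π.2.2⟩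
  left_inv w := Subtype.ext (toMatrix_ofMatrix w.1)
  right_inv π := Subtype.ext (ofMatrix_toMatrix (π.2.1.rowsLE hμ) π.2.2)

end CornerEquiv

theorem geomWeight_eq (q : ℝ) (b c : ℕ) (w : Fin b × Fin c → ℕ) :
    geomWeight q b c w = (1 - q) ^ (b * c) * q ^ ∑ p, w p := by
  rw [geomWeight, Finset.prod_mul_distrib, Finset.prod_const, Finset.prod_pow_eq_pow_sum,
    Finset.card_univ, Fintype.card_prod, Fintype.card_fin, Fintype.card_fin]

instance finite_hasShape_entriesLE (μ : YoungDiagram) (c : ℕ) :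
    Finite {π : PlanePartition // π.hasShape μ ∧ π.entriesLE c} := by
  refine Finite.of_injective
    (fun π (p : μ.cells) =>
      (⟨π.1.entry p.1.1 p.1.2, Nat.lt_succ_of_le (π.2.2 _ _)⟩ : Fin (c + 1)))
    fun π π' h => Subtype.ext (PlanePartition.ext fun i j => ?_)
  by_cases hij : (i, j) ∈ μ
  · simpa using congrFun h ⟨(i, j), hij⟩
  · rw [π.2.1.entry_eq_zero hij, π'.2.1.entry_eq_zero hij]

theorem cornerGrowth_gMeasure_general (q : ℝ) (b c : ℕ)
    (hc : 0 < c) (μ : YoungDiagram) (hμ : μ.colLen 0 ≤ b) :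
    ∑' w : {w : Fin b × Fin c → ℕ //
        ∀ k : Fin b,
          lastPassage (matExt w) (0, 0) (b - 1 - (k : ℕ), c - 1) = μ.rowLen k},
      geomWeight q b c w.1
    = (1 - q) ^ (b * c) * grothG μ c (fun _ => q) := by
  let weight (π : PlanePartition) : ℝ :=
    (1 - q) ^ (b * c) * ∏ ℓ ∈ Finset.range c, q ^ π.cCol (ℓ + 1)
  change ∑' w : {w // cornerEvent b c μ w}, geomWeight q b c w.1 = _
  calc _ = ∑' w : {w // cornerEvent b c μ w}, weight (cornerEquiv hc hμ w).1 := by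
        refine tsum_congr fun w => ?_
        rw [geomWeight_eq, ← PlanePartition.sum_cCol_ofMatrix w.1, ← Finset.prod_pow_eq_pow_sum]
        rfl
    _ = ∑' π : {π : PlanePartition // π.hasShape μ ∧ π.entriesLE c}, weight π :=
        (cornerEquiv hc hμ).tsum_eq fun π => weight π.1
    _ = _ := by
        rw [tsum_mul_left, grothG, ← finsum_set_coe_eq_finsum_mem,
          tsum_eq_finsum (Set.toFinite _)]
        rfl

/-- Corner growth model and the `g`-measure: for i.i.d. Geom(q) entries
`w : Fin b × Fin c → ℕ` and last passage times `G(m,n)`, for every partition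
`λ = (λ_1 ≥ ⋯ ≥ λ_b ≥ 0)` (realized as the row lengths of a Young diagram `μ` with at
most `b` rows), `P(G(b,c) = λ_1, …, G(1,c) = λ_b) = (1−q)^{bc} g_λ(q,…,q)`.
Here `G(b−k, c)` is the last passage time from `(0,0)` to `(b−1−k, c−1)` (0-indexed). -/
theorem cornerGrowth_gMeasure (q : ℝ) (hq : q ∈ Set.Ioo (0 : ℝ) 1) (b c : ℕ)
    (hb : 0 < b) (hc : 0 < c) (μ : YoungDiagram) (hμ : μ.colLen 0 ≤ b) :
    ∑' w : {w : Fin b × Fin c → ℕ //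
        ∀ k : Fin b,
          lastPassage (matExt w) (0, 0) (b - 1 - (k : ℕ), c - 1) = μ.rowLen k},
      geomWeight q b c w.1
    = (1 - q) ^ (b * c) * grothG μ c (fun _ => q) :=
  cornerGrowth_gMeasure_general q b c hc μ hμ
end
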